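/- arXiv:1705.05353 — 7 statements merged into one kernel-verified Lean document; each statement's English description precedes it below -/
import Mathlib

section
/- Let n ≥ 1 and let u_{i,j} ∈ ℂ (for 1 ≤ i < j ≤ n) and b_i ∈ [0,∞) (for 1 ≤ i ≤ n) be numbers satisfying the complex stability condition: for every subset I ⊆ {1,…,n}, ∑_{i,j ∈ I, i<j} Re u_{i,j} ≥ −∑_{i ∈ I} b_i. Then |∑_{g ∈ 𝒞_n} ∏_{ij ∈ g} (e^{−u_{i,j}} − 1)| ≤ e^{∑_{i=1}^n b_i} · ∑_{t ∈ 𝒯_n} ∏_{ij ∈ t} |1 − e^{−|Re u_{i,j}| + i·Im u_{i,j}}|. -/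
/-!
Order the edges by `Re u`, breaking ties injectively, and send every connected graph `g` to its
minimal spanning tree `T`. The graphs sent to `T` are exactly `T ∪ S` with `S ⊆ D(T)`, the set of
non-tree edges heavier than every edge of the `T`-path joining their endpoints (Penrose's
partition scheme), so with `ζ = e^{-u} - 1` the sum over connected graphs equals
`∑_T ∏_T ζ · ∏_{D(T)} e^{-u}`.

On a tree edge `|ζ| = e^{max(0, -Re u)} |1 - e^{-|Re u| + i Im u}|`, so it suffices that
`∑_{e ∈ T} min(Re u_e, 0) + ∑_{e ∈ D(T)} Re u_e ≥ -∑ b`. Let `H` be the forest of tree edges with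
`Re u < 0`. Summing the stability condition over the components of `H` bounds from below by
`-∑ b` the total of `Re u` over the pairs inside components. The tree edges among these pairs
are exactly the edges of `H`. A non-tree pair inside a component has its whole `T`-path in `H`,
so if it is not in `D(T)` it is lighter than a negative edge and has `Re u ≤ 0`; an edge of
`D(T)` joining two components is heavier than a non-negative edge of its path, so `Re u ≥ 0`.
-/

open scoped Classical

open Finset
open scoped symmDiff

lemma Fintype.exists_injective_ranking {β α : Type*} [Fintype β] [LinearOrder α] (w : β → α) :
    ∃ κ : β → ℕ, Function.Injective κ ∧ ∀ e f, κ e ≤ κ f → w e ≤ w f := by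
  obtain ⟨σ, hσ⟩ : ∃ σ : Equiv.Perm (Fin (Fintype.card β)),
      Monotone ((w ∘ (Fintype.equivFin β).symm) ∘ σ) := ⟨_, Tuple.monotone_sort _⟩
  refine ⟨fun e => σ.symm (Fintype.equivFin β e), fun e f h => ?_, fun e f h => ?_⟩
  · simpa using Fin.ext h
  · simpa using hσ (Fin.le_def.2 h)

open Complex in
lemma norm_exp_neg_sub_one (z : ℂ) :
    ‖exp (-z) - 1‖ = Real.exp (-min z.re 0) * ‖1 - exp (-|z.re| + z.im * I)‖ := by
  rcases le_or_gt 0 z.re with h | h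
  · rw [min_eq_right h, neg_zero, Real.exp_zero, one_mul, abs_of_nonneg h, norm_sub_rev]
    have hconj : -(z.re : ℂ) + z.im * I = (starRingEnd ℂ) (-z) := by
      apply Complex.ext <;> simp
    rw [hconj, exp_conj, ← norm_conj, map_sub, map_one]
  · rw [min_eq_left h.le, abs_of_neg h, ofReal_neg, neg_neg, re_add_im]
    have hfac : exp (-z) - 1 = exp (-z) * (1 - exp z) := by
      rw [mul_sub, mul_one, ← exp_add, neg_add_cancel, exp_zero]
    rw [hfac, norm_mul, norm_exp, neg_re]

namespace SimpleGraph

variable {V : Type*} {H T : SimpleGraph V}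

lemma IsAcyclic.reachable_iff_forall_mem_edges (hT : T.IsAcyclic) (hHT : H ≤ T) {x y : V}
    {p : T.Walk x y} (hp : p.IsPath) : H.Reachable x y ↔ ∀ f ∈ p.edges, f ∈ H.edgeSet := by
  refine ⟨fun ⟨q⟩ => ?_, fun h => (p.transfer H h).reachable⟩
  have := hT.subsingleton_path x y
  obtain rfl : p = q.bypass.mapLe hHT :=
    congrArg Subtype.val (Subsingleton.elim ⟨p, hp⟩ ⟨_, q.bypass_isPath.mapLe hHT⟩)
  rw [Walk.edges_mapLe_eq_edges]
  exact fun f hf => q.bypass.edges_subset_edgeSet hf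

lemma IsAcyclic.edges_eq_of_adj (hT : T.IsAcyclic) {x y : V} (h : T.Adj x y) {p : T.Walk x y}
    (hp : p.IsPath) : p.edges = [s(x, y)] := by
  have := hT.subsingleton_path x y
  obtain rfl : p = Walk.cons h .nil :=
    congrArg Subtype.val (Subsingleton.elim ⟨p, hp⟩ (Path.singleton h))
  rfl

lemma edgeFinset_sup_edge_deleteEdges {x y : V} (hxy : x ≠ y) (f : Sym2 V)
    [Fintype T.edgeSet] [Fintype ((T ⊔ edge x y).deleteEdges {f}).edgeSet] :
    ((T ⊔ edge x y).deleteEdges {f}).edgeFinset = (insert s(x, y) T.edgeFinset).erase f := by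
  rw [← coe_inj]
  simp only [coe_edgeFinset, edgeSet_deleteEdges, edgeSet_sup, edgeSet_edge_of_ne hxy, coe_erase,
    coe_insert, Set.union_singleton]

lemma IsTree.isTree_sup_edge_deleteEdges [Finite V] (hT : T.IsTree) {x y : V} (hxy : x ≠ y)
    (hnadj : ¬ T.Adj x y) {p : T.Walk x y} (hp : p.IsPath) {f : Sym2 V} (hf : f ∈ p.edges) :
    ((T ⊔ edge x y).deleteEdges {f}).IsTree := by
  have := Fintype.ofFinite V
  set G := T ⊔ edge x y
  have hyx : G.Adj y x := Or.inr ((edge_adj ..).2 ⟨.inr ⟨rfl, rfl⟩, hxy.symm⟩)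
  have hcycle : (Walk.cons hyx (p.mapLe le_sup_left)).IsCycle := by
    rw [Walk.cons_isCycle_iff, Walk.edges_mapLe_eq_edges, Sym2.eq_swap]
    exact ⟨hp.mapLe _, fun h => hnadj (p.adj_of_mem_edges h)⟩
  have hbridge : ¬ G.IsBridge f := fun h => h.notMem_edges_of_isCycle hcycle (by simp [hf])
  have hfT : f ∈ T.edgeFinset := mem_edgeFinset.2 (p.edges_subset_edgeSet hf)
  have hxyT : s(x, y) ∉ T.edgeFinset := by simpa using hnadj
  induction f using Sym2.ind with | _ a b => ?_
  rw [isTree_iff_connected_and_card]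
  refine ⟨(hT.connected.mono le_sup_left).connected_delete_edge_of_not_isBridge hbridge, ?_⟩
  rw [Nat.card_eq_fintype_card, ← edgeFinset_card, edgeFinset_sup_edge_deleteEdges hxy,
    card_erase_of_mem (mem_insert_of_mem hfT), card_insert_of_notMem hxyT,
    Nat.card_eq_fintype_card, ← hT.card_edgeFinset]
  simp

variable (κ : Sym2 V → ℕ)

def DominatesPath (T : SimpleGraph V) (e : Sym2 V) : Prop :=
  ∀ ⦃x y⦄, e = s(x, y) → ∀ p : T.Walk x y, p.IsPath → ∀ f ∈ p.edges, κ f < κ e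

/-- The cycle property: for injective `κ` it characterises the unique spanning tree of `g` of
minimal total weight. -/
def IsMinSpanningTree (g T : SimpleGraph V) : Prop :=
  T.IsTree ∧ T ≤ g ∧ ∀ e ∈ g.edgeSet, e ∉ T.edgeSet → DominatesPath κ T e

variable {κ}

lemma Connected.exists_isMinSpanningTree [Fintype V] (hκ : Function.Injective κ)
    {g : SimpleGraph V} (hg : g.Connected) : ∃ T, IsMinSpanningTree κ g T := by
  obtain ⟨T₀, hT₀g, hT₀⟩ := hg.exists_isTree_le
  obtain ⟨T, hT, hmin⟩ := exists_min_image ({T | T ≤ g ∧ T.IsTree} : Finset _)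
    (fun T => ∑ e ∈ T.edgeFinset, κ e) ⟨T₀, by simp [hT₀g, hT₀]⟩
  simp only [mem_filter, mem_univ, true_and, and_imp] at hT hmin
  obtain ⟨hTg, hT⟩ := hT
  refine ⟨T, hT, hTg, fun e heg heT x y hexy p hp f hf => ?_⟩
  subst hexy
  have hfT : f ∈ T.edgeFinset := mem_edgeFinset.2 (p.edges_subset_edgeSet hf)
  have hxy : x ≠ y := g.ne_of_adj heg
  have hnadj : ¬ T.Adj x y := heT
  by_contra hle
  have hlt : κ s(x, y) < κ f :=
    (not_lt.1 hle).lt_of_ne fun h => heT (hκ h ▸ mem_edgeFinset.1 hfT)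
  -- exchanging `f` for `s(x, y)` would give a lighter spanning tree of `g`
  have hT' := hmin _ ?_ (hT.isTree_sup_edge_deleteEdges hxy hnadj hp hf)
  · rw [edgeFinset_sup_edge_deleteEdges hxy] at hT'
    have := sum_erase_add _ κ (mem_insert_of_mem hfT : f ∈ insert s(x, y) T.edgeFinset)
    rw [sum_insert (by simpa using hnadj)] at this
    omega
  · exact (deleteEdges_le _).trans (sup_le hTg ((edge_le_iff _).2 (.inr heg)))

lemma IsMinSpanningTree.exists_lt_of_mem_sdiff {g T₁ T₂ : SimpleGraph V}
    (h₁ : IsMinSpanningTree κ g T₁) (h₂ : IsMinSpanningTree κ g T₂) {e : Sym2 V}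
    (he₁ : e ∈ T₁.edgeSet) (he₂ : e ∉ T₂.edgeSet) :
    ∃ f ∈ T₂.edgeSet, f ∉ T₁.edgeSet ∧ κ f < κ e := by
  induction e using Sym2.ind with | _ x y => ?_
  obtain ⟨p, hp⟩ := h₂.1.connected.exists_isPath x y
  have hdom := h₂.2.2 _ (h₁.2.1 he₁) he₂ rfl p hp
  by_contra! hsub
  have hpT₁ : ∀ f ∈ p.edges, f ∈ T₁.edgeSet := fun f hf => by
    by_contra hf₁
    exact (hsub f (p.edges_subset_edgeSet hf) hf₁).not_gt (hdom f hf)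
  have hedges := h₁.1.isAcyclic.edges_eq_of_adj he₁ (hp.transfer hpT₁)
  rw [Walk.edges_transfer] at hedges
  exact he₂ (p.edges_subset_edgeSet (by simp [hedges]))

lemma IsMinSpanningTree.unique [Fintype V] {g T₁ T₂ : SimpleGraph V}
    (h₁ : IsMinSpanningTree κ g T₁) (h₂ : IsMinSpanningTree κ g T₂) : T₁ = T₂ := by
  by_contra hne
  obtain ⟨e, he, hmin⟩ := exists_min_image (T₁.edgeFinset ∆ T₂.edgeFinset) κ
    (symmDiff_nonempty.2 (edgeFinset_inj.not.2 hne))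
  rcases mem_symmDiff.1 he with ⟨he₁, he₂⟩ | ⟨he₂, he₁⟩
  · obtain ⟨f, hf₂, hf₁, hlt⟩ :=
      h₁.exists_lt_of_mem_sdiff h₂ (mem_edgeFinset.1 he₁) (by simpa using he₂)
    exact (hmin f (mem_symmDiff.2 (.inr ⟨by simpa using hf₂, by simpa using hf₁⟩))).not_gt hlt
  · obtain ⟨f, hf₁, hf₂, hlt⟩ :=
      h₂.exists_lt_of_mem_sdiff h₁ (mem_edgeFinset.1 he₂) (by simpa using he₁)
    exact (hmin f (mem_symmDiff.2 (.inl ⟨by simpa using hf₁, by simpa using hf₂⟩))).not_gt hlt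

section Penrose

variable [Fintype V] [DecidableEq V] {T : SimpleGraph V}

/-- The connected graphs whose minimal spanning tree is `T` are the graphs `T ⊔ fromEdgeSet S`
with `S ⊆ penroseEdges κ T`. -/
noncomputable def penroseEdges (κ : Sym2 V → ℕ) (T : SimpleGraph V) : Finset (Sym2 V) :=
  {e | ¬ e.IsDiag ∧ e ∉ T.edgeSet ∧ DominatesPath κ T e}

lemma mem_penroseEdges {e : Sym2 V} :
    e ∈ penroseEdges κ T ↔ ¬ e.IsDiag ∧ e ∉ T.edgeSet ∧ DominatesPath κ T e := by
  simp [penroseEdges]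

lemma disjoint_edgeFinset_penroseEdges [Fintype T.edgeSet] :
    Disjoint T.edgeFinset (penroseEdges κ T) :=
  Finset.disjoint_left.2 fun _ he he' => (mem_penroseEdges.1 he').2.1 (mem_edgeFinset.1 he)

lemma edgeSet_sup_fromEdgeSet {S : Finset (Sym2 V)} (hS : S ⊆ penroseEdges κ T) :
    (T ⊔ fromEdgeSet ↑S).edgeSet = T.edgeSet ∪ ↑S := by
  rw [edgeSet_sup, edgeSet_fromEdgeSet,
    (sdiff_eq_left (x := (S : Set (Sym2 V))) (y := Sym2.diagSet)).2
      (Set.disjoint_left.2 fun _ he => (mem_penroseEdges.1 (hS he)).1)]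

lemma edgeFinset_sup_fromEdgeSet {S : Finset (Sym2 V)} (hS : S ⊆ penroseEdges κ T)
    [Fintype T.edgeSet] [Fintype (T ⊔ fromEdgeSet ↑S).edgeSet] :
    (T ⊔ fromEdgeSet ↑S).edgeFinset = T.edgeFinset ∪ S := by
  rw [← coe_inj, coe_edgeFinset, coe_union, coe_edgeFinset, edgeSet_sup_fromEdgeSet hS]

variable (κ T) in
lemma injOn_sup_fromEdgeSet :
    Set.InjOn (fun S : Finset (Sym2 V) => T ⊔ fromEdgeSet ↑S) {S | S ⊆ penroseEdges κ T} := by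
  intro S hS S' hS' h
  have hE := congrArg edgeSet h
  simp only [edgeSet_sup_fromEdgeSet hS, edgeSet_sup_fromEdgeSet hS'] at hE
  ext e
  have hnT : ∀ {S : Finset (Sym2 V)}, S ⊆ penroseEdges κ T → e ∈ S → e ∉ T.edgeSet :=
    fun hS he => (mem_penroseEdges.1 (hS he)).2.1
  have := Set.ext_iff.1 hE e
  simp only [Set.mem_union, mem_coe] at this
  grind

lemma IsTree.isMinSpanningTree_sup_fromEdgeSet (hT : T.IsTree) {S : Finset (Sym2 V)}
    (hS : S ⊆ penroseEdges κ T) : IsMinSpanningTree κ (T ⊔ fromEdgeSet ↑S) T := by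
  refine ⟨hT, le_sup_left, fun e he heT => ?_⟩
  rw [← mem_edgeFinset, edgeFinset_sup_fromEdgeSet hS, mem_union, mem_edgeFinset] at he
  exact (mem_penroseEdges.1 (hS (he.resolve_left heT))).2.2

lemma IsMinSpanningTree.sdiff_subset_penroseEdges {g : SimpleGraph V}
    (h : IsMinSpanningTree κ g T) : g.edgeFinset \ T.edgeFinset ⊆ penroseEdges κ T := by
  intro e he
  simp only [mem_sdiff, mem_edgeFinset] at he
  exact mem_penroseEdges.2 ⟨g.not_isDiag_of_mem_edgeSet he.1, he.2, h.2.2 e he.1 he.2⟩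

lemma sup_fromEdgeSet_sdiff {g : SimpleGraph V} (h : T ≤ g) :
    T ⊔ fromEdgeSet ↑(g.edgeFinset \ T.edgeFinset) = g := by
  refine edgeSet_injective ?_
  rw [edgeSet_sup, edgeSet_fromEdgeSet, coe_sdiff, coe_edgeFinset, coe_edgeFinset]
  have := g.edgeSet_subset_compl_diagSet
  have := edgeSet_mono h
  ext e
  simp only [Set.mem_union, Set.mem_sdiff]
  grind

theorem sum_connected_prod_eq_sum_isTree {R : Type*} [CommSemiring R]
    (hκ : Function.Injective κ) (ζ : Sym2 V → R) :
    ∑ g ∈ univ.filter (fun g : SimpleGraph V => g.Connected), ∏ e ∈ g.edgeFinset, ζ e =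
      ∑ T ∈ univ.filter (fun T : SimpleGraph V => T.IsTree),
        (∏ e ∈ T.edgeFinset, ζ e) * ∏ e ∈ penroseEdges κ T, (1 + ζ e) := by
  calc _ = ∑ x ∈ (univ.filter IsTree).sigma fun T => (penroseEdges κ T).powerset,
        ∏ e ∈ (x.1 ⊔ fromEdgeSet ↑x.2).edgeFinset, ζ e := by
        refine (sum_bij (fun x _ => x.1 ⊔ fromEdgeSet ↑x.2) ?_ ?_ ?_
          fun _ _ => by congr!).symm
        · rintro ⟨T, S⟩ hx
          simp only [mem_sigma, mem_filter, mem_univ, true_and] at hx ⊢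
          exact hx.1.connected.mono le_sup_left
        · rintro ⟨T, S⟩ hx ⟨T', S'⟩ hx' h
          simp only [mem_sigma, mem_filter, mem_univ, true_and, mem_powerset] at hx hx' h
          obtain rfl : T = T' := (hx.1.isMinSpanningTree_sup_fromEdgeSet hx.2).unique
            (h ▸ hx'.1.isMinSpanningTree_sup_fromEdgeSet hx'.2)
          rw [injOn_sup_fromEdgeSet κ T hx.2 hx'.2 h]
        · intro g hg
          obtain ⟨T, hT⟩ := (mem_filter.1 hg).2.exists_isMinSpanningTree hκ
          exact ⟨⟨T, g.edgeFinset \ T.edgeFinset⟩,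
            by simpa [hT.1] using hT.sdiff_subset_penroseEdges, sup_fromEdgeSet_sdiff hT.2.1⟩
    _ = _ := by
        rw [sum_sigma]
        refine sum_congr rfl fun T _ => ?_
        rw [prod_one_add, mul_sum]
        refine sum_congr rfl fun S hS => ?_
        rw [edgeFinset_sup_fromEdgeSet (mem_powerset.1 hS),
          prod_union (disjoint_edgeFinset_penroseEdges.mono_right (mem_powerset.1 hS))]

end Penrose

section Stability

variable [Fintype V] [DecidableEq V] {T : SimpleGraph V} {w : Sym2 V → ℝ}

noncomputable def intraComponentEdges (H : SimpleGraph V) : Finset (Sym2 V) :=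
  univ.biUnion fun c : H.ConnectedComponent =>
    {e ∈ ({v | H.connectedComponentMk v = c} : Finset V).sym2 | ¬ e.IsDiag}

lemma mk_mem_intraComponentEdges {H : SimpleGraph V} {x y : V} :
    s(x, y) ∈ H.intraComponentEdges ↔ x ≠ y ∧ H.Reachable x y := by
  simp only [intraComponentEdges, mem_biUnion, mem_univ, true_and, mem_filter, mk_mem_sym2_iff,
    Sym2.mk_isDiag_iff, ← ConnectedComponent.eq]
  grind

lemma neg_sum_le_sum_intraComponentEdges {b : V → ℝ}
    (hstab : ∀ I : Finset V, -∑ i ∈ I, b i ≤ ∑ e ∈ I.sym2 with ¬ e.IsDiag, w e)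
    (H : SimpleGraph V) : -∑ i, b i ≤ ∑ e ∈ H.intraComponentEdges, w e := by
  rw [intraComponentEdges, sum_biUnion, ← sum_fiberwise univ H.connectedComponentMk b,
    ← sum_neg_distrib]
  · exact sum_le_sum fun c _ => hstab _
  · intro c _ c' _ hcc'
    refine Finset.disjoint_left.2 fun e he he' => ?_
    induction e using Sym2.ind with | _ x y => ?_
    simp only [mem_filter, mk_mem_sym2_iff, mem_univ, true_and] at he he'
    exact hcc' (he.1.1.symm.trans he'.1.1)

lemma IsAcyclic.mem_intraComponentEdges_deleteEdges_iff (hT : T.IsAcyclic) {e : Sym2 V}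
    (he : e ∈ T.edgeSet) :
    e ∈ (T.deleteEdges {e | 0 ≤ w e}).intraComponentEdges ↔ w e < 0 := by
  induction e using Sym2.ind with | _ x y => ?_
  have hxy : T.Adj x y := he
  rw [mk_mem_intraComponentEdges, hT.reachable_iff_forall_mem_edges (deleteEdges_le _)
    (Path.singleton hxy).isPath]
  simp [he, T.ne_of_adj hxy, Path.singleton]

variable {κ : Sym2 V → ℕ} (hκw : ∀ e f, κ e ≤ κ f → w e ≤ w f)
include hκw

lemma IsAcyclic.nonpos_of_mem_intraComponentEdges (hT : T.IsAcyclic) {e : Sym2 V}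
    (he : e ∈ (T.deleteEdges {e | 0 ≤ w e}).intraComponentEdges) (heT : e ∉ T.edgeSet)
    (heD : e ∉ penroseEdges κ T) : w e ≤ 0 := by
  have hdiag : ¬ e.IsDiag := by
    induction e using Sym2.ind with
    | _ x y => exact fun h => (mk_mem_intraComponentEdges.1 he).1 h
  have hdom : ¬ DominatesPath κ T e := fun h => heD (mem_penroseEdges.2 ⟨hdiag, heT, h⟩)
  simp only [DominatesPath] at hdom
  push Not at hdom
  obtain ⟨x, y, rfl, p, hp, f, hf, hfe⟩ := hdom
  have hH := (hT.reachable_iff_forall_mem_edges (deleteEdges_le _) hp).1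
    (mk_mem_intraComponentEdges.1 he).2 f hf
  simp only [edgeSet_deleteEdges, Set.mem_sdiff, Set.mem_ofPred_eq, not_le] at hH
  linarith [hκw _ _ hfe]

lemma IsTree.nonneg_of_mem_penroseEdges (hT : T.IsTree) {e : Sym2 V}
    (heD : e ∈ penroseEdges κ T)
    (he : e ∉ (T.deleteEdges {e | 0 ≤ w e}).intraComponentEdges) : 0 ≤ w e := by
  induction e using Sym2.ind with | _ x y => ?_
  rw [mem_penroseEdges, Sym2.mk_isDiag_iff] at heD
  obtain ⟨hxy, -, hdom⟩ := heD
  obtain ⟨p, hp⟩ := hT.connected.exists_isPath x y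
  rw [mk_mem_intraComponentEdges, hT.isAcyclic.reachable_iff_forall_mem_edges
    (deleteEdges_le _) hp] at he
  push Not at he
  obtain ⟨f, hf, hfH⟩ := he hxy
  simp only [edgeSet_deleteEdges, Set.mem_sdiff, Set.mem_ofPred_eq, not_and, not_not] at hfH
  linarith [hfH (p.edges_subset_edgeSet hf), hκw _ _ (hdom rfl p hp f hf).le]

theorem IsTree.neg_sum_le_sum_min_add_sum_penroseEdges (hT : T.IsTree) {b : V → ℝ}
    (hstab : ∀ I : Finset V, -∑ i ∈ I, b i ≤ ∑ e ∈ I.sym2 with ¬ e.IsDiag, w e) :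
    -∑ i, b i ≤ ∑ e ∈ T.edgeFinset, min (w e) 0 + ∑ e ∈ penroseEdges κ T, w e := by
  set Q := (T.deleteEdges {e | 0 ≤ w e}).intraComponentEdges
  have hQT : {e ∈ Q | e ∈ T.edgeSet} = {e ∈ T.edgeFinset | w e < 0} := by
    ext e
    simp only [mem_filter, mem_edgeFinset]
    exact ⟨fun h => ⟨h.2, (hT.isAcyclic.mem_intraComponentEdges_deleteEdges_iff h.2).1 h.1⟩,
      fun h => ⟨(hT.isAcyclic.mem_intraComponentEdges_deleteEdges_iff h.1).2 h.2, h.1⟩⟩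
  have hQD : ∑ e ∈ Q with e ∉ T.edgeSet, w e ≤ ∑ e ∈ penroseEdges κ T, w e := by
    rw [← sum_sdiff_le_sum_sdiff]
    refine (sum_nonpos fun e he => ?_).trans (sum_nonneg fun e he => ?_)
    · simp only [mem_sdiff, mem_filter] at he
      exact hT.isAcyclic.nonpos_of_mem_intraComponentEdges hκw he.1.1 he.1.2 he.2
    · simp only [mem_sdiff, mem_filter, not_and, not_not] at he
      exact hT.nonneg_of_mem_penroseEdges hκw he.1
        fun hQ => (mem_penroseEdges.1 he.1).2.1 (he.2 hQ)
  calc -∑ i, b i ≤ ∑ e ∈ Q, w e := neg_sum_le_sum_intraComponentEdges hstab _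
    _ = ∑ e ∈ Q with e ∈ T.edgeSet, w e + ∑ e ∈ Q with e ∉ T.edgeSet, w e :=
      (sum_filter_add_sum_filter_not _ _ _).symm
    _ ≤ _ := by
      rw [hQT, sum_filter]
      refine add_le_add (le_of_eq (sum_congr rfl fun e _ => ?_)) hQD
      split_ifs with h
      · exact (min_eq_left h.le).symm
      · exact (min_eq_right (not_lt.1 h)).symm

end Stability

section TreeGraphBound

open Complex

variable [Fintype V] [DecidableEq V] {u : Sym2 V → ℂ} {b : V → ℝ}

lemma IsTree.norm_prod_mul_prod_penroseEdges_le {κ : Sym2 V → ℕ} {T : SimpleGraph V}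
    (hT : T.IsTree)
    (hstab : ∀ I : Finset V, -∑ i ∈ I, b i ≤ ∑ e ∈ I.sym2 with ¬ e.IsDiag, (u e).re)
    (hκu : ∀ e f, κ e ≤ κ f → (u e).re ≤ (u f).re) :
    ‖(∏ e ∈ T.edgeFinset, (exp (-u e) - 1)) * ∏ e ∈ penroseEdges κ T, (1 + (exp (-u e) - 1))‖
      ≤ Real.exp (∑ i, b i) * ∏ e ∈ T.edgeFinset, ‖1 - exp (-|(u e).re| + (u e).im * I)‖ := by
  have hstab' := hT.neg_sum_le_sum_min_add_sum_penroseEdges hκu hstab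
  simp only [norm_mul, norm_prod, norm_exp_neg_sub_one, add_sub_cancel, norm_exp, neg_re,
    prod_mul_distrib, ← Real.exp_sum]
  calc _ = Real.exp (-(∑ e ∈ T.edgeFinset, min (u e).re 0 + ∑ e ∈ penroseEdges κ T, (u e).re))
        * ∏ e ∈ T.edgeFinset, ‖1 - exp (-|(u e).re| + (u e).im * I)‖ := by
        rw [neg_add, Real.exp_add, sum_neg_distrib, sum_neg_distrib]; ring
    _ ≤ _ := by gcongr; linarith

theorem norm_sum_connected_le
    (hstab : ∀ I : Finset V, -∑ i ∈ I, b i ≤ ∑ e ∈ I.sym2 with ¬ e.IsDiag, (u e).re) :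
    ‖∑ g ∈ univ.filter (fun g : SimpleGraph V => g.Connected),
        ∏ e ∈ g.edgeFinset, (exp (-u e) - 1)‖
      ≤ Real.exp (∑ i, b i) * ∑ T ∈ univ.filter (fun T : SimpleGraph V => T.IsTree),
          ∏ e ∈ T.edgeFinset, ‖1 - exp (-|(u e).re| + (u e).im * I)‖ := by
  obtain ⟨κ, hκ, hκu⟩ := Fintype.exists_injective_ranking fun e => (u e).re
  rw [sum_connected_prod_eq_sum_isTree hκ, mul_sum]
  exact (norm_sum_le _ _).trans
    (sum_le_sum fun T hT => (mem_filter.1 hT).2.norm_prod_mul_prod_penroseEdges_le hstab hκu)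

end TreeGraphBound

end SimpleGraph

theorem tree_graph_bound_complex_general (n : ℕ)
    (u : Sym2 (Fin n) → ℂ) (b : Fin n → ℝ)
    (hstab : ∀ I : Finset (Fin n),
      -∑ i ∈ I, b i ≤
        ∑ p ∈ (I ×ˢ I).filter (fun p : Fin n × Fin n => p.1 < p.2), (u s(p.1, p.2)).re) :
    ‖(∑ g ∈ Finset.univ.filter (fun g : SimpleGraph (Fin n) => g.Connected),
        ∏ e ∈ g.edgeFinset, (Complex.exp (-u e) - 1))‖
      ≤ Real.exp (∑ i, b i) *
        ∑ t ∈ Finset.univ.filter (fun t : SimpleGraph (Fin n) => t.IsTree),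
          ∏ e ∈ t.edgeFinset,
            ‖1 - Complex.exp (-(|(u e).re| : ℝ) + (u e).im * Complex.I)‖ := by
  refine SimpleGraph.norm_sum_connected_le fun I => (hstab I).trans_eq ?_
  rw [sum_sym2_filter_not_isDiag]
  refine sum_congr (ext fun p => ?_) fun _ _ => rfl
  simp only [mem_filter, mem_product, mem_offDiag]
  exact ⟨fun h => ⟨⟨h.1.1, h.1.2, h.2.ne⟩, h.2⟩, fun h => ⟨⟨h.1.1, h.1.2.1⟩, h.2⟩⟩

/-- **Improved tree-graph bound**, complex case.  The stability condition is
imposed on the real parts, and on each tree edge the factor is the modulus of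
`1 - exp(-|Re u| + i Im u)`. -/
theorem tree_graph_bound_complex (n : ℕ) (hn : 1 ≤ n)
    (u : Sym2 (Fin n) → ℂ) (b : Fin n → ℝ) (hb : ∀ i, 0 ≤ b i)
    (hstab : ∀ I : Finset (Fin n),
      -∑ i ∈ I, b i ≤
        ∑ p ∈ (I ×ˢ I).filter (fun p : Fin n × Fin n => p.1 < p.2), (u s(p.1, p.2)).re) :
    ‖(∑ g ∈ Finset.univ.filter (fun g : SimpleGraph (Fin n) => g.Connected),
        ∏ e ∈ g.edgeFinset, (Complex.exp (-u e) - 1))‖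
      ≤ Real.exp (∑ i, b i) *
        ∑ t ∈ Finset.univ.filter (fun t : SimpleGraph (Fin n) => t.IsTree),
          ∏ e ∈ t.edgeFinset,
            ‖1 - Complex.exp (-(|(u e).re| : ℝ) + (u e).im * Complex.I)‖ :=
  tree_graph_bound_complex_general n u b hstab
end

section
/- Let n ≥ 1 and let (T, E) be a partition scheme on the graphs on {1,…,n}. Then for any complex numbers u_{i,j} (1 ≤ i < j ≤ n), ∑_{g ∈ 𝒞_n} ∏_{ij ∈ g} (e^{−u_{i,j}} − 1) = ∑_{t ∈ 𝒯_n} ∏_{ij ∈ t} (e^{−u_{i,j}} − 1) · ∏_{ij ∈ E(t)} e^{−u_{i,j}}. -/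
/-!
Group the connected graphs `g` by their tree `T g`. Since a graph containing a spanning tree is
connected, the fibre over `t` consists of all graphs whose edge set lies in the Boolean interval
`[t, t ∪ E t]`, and the sum of `∏ f` over such an interval factors as `∏_{t} f · ∏_{E t} (1 + f)`.
With `f = e^{-u} - 1` the second factor is `∏_{E t} e^{-u}`.
-/

open scoped Classical

open Finset

theorem Finset.sum_Icc_prod_eq_mul_prod_one_add {ι R : Type*} [CommSemiring R] [DecidableEq ι]
    {s t : Finset ι} (hst : s ⊆ t) (f : ι → R) :
    ∑ A ∈ Icc s t, ∏ i ∈ A, f i = (∏ i ∈ s, f i) * ∏ i ∈ t \ s, (1 + f i) := by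
  have hdisj : ∀ B ∈ (t \ s).powerset, Disjoint s B := fun B hB =>
    disjoint_of_subset_right (mem_powerset.1 hB) disjoint_sdiff
  have hinj : Set.InjOn (s ∪ ·) ((t \ s).powerset : Set (Finset ι)) := fun B hB B' hB' hBB' => by
    simpa only [union_sdiff_cancel_left (hdisj B hB), union_sdiff_cancel_left (hdisj B' hB')] using
      congrArg (· \ s) hBB'
  rw [Icc_eq_image_powerset hst, sum_image hinj, prod_one_add, mul_sum]
  exact sum_congr rfl fun B hB => prod_union (hdisj B hB)

namespace SimpleGraph

theorem edgeSet_fromEdgeSet_of_not_isDiag {V : Type*} {s : Set (Sym2 V)}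
    (hs : ∀ e ∈ s, ¬ e.IsDiag) : (fromEdgeSet s).edgeSet = s := by
  rw [edgeSet_fromEdgeSet, sdiff_eq_left]
  exact Set.disjoint_left.2 hs

theorem sum_filter_edgeFinset_mem {V M : Type*} [Fintype V] [DecidableEq V] [AddCommMonoid M]
    {𝒜 : Finset (Finset (Sym2 V))}
    (h𝒜 : ∀ A ∈ 𝒜, ∀ e ∈ A, ¬ e.IsDiag) (F : Finset (Sym2 V) → M) :
    ∑ g ∈ univ.filter (fun g : SimpleGraph V => g.edgeFinset ∈ 𝒜), F g.edgeFinset =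
      ∑ A ∈ 𝒜, F A := by
  -- The β-redex makes `edgeFinset` use the same `Fintype` instance as the goals of `sum_nbij'`.
  have hfrom : ∀ A ∈ 𝒜, (fun g : SimpleGraph V => g.edgeFinset) (fromEdgeSet A) = A :=
    fun A hA => coe_injective (by rw [coe_edgeFinset, edgeSet_fromEdgeSet_of_not_isDiag (h𝒜 A hA)])
  refine sum_nbij' (fun g => g.edgeFinset) (fun A => fromEdgeSet A) ?_ ?_ ?_ ?_ (fun _ _ => rfl)
  · intro g hg
    simpa using hg
  · intro A hA
    simpa [hfrom A hA] using hA
  · intro g _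
    simp [coe_edgeFinset, fromEdgeSet_edgeSet]
  · intro A hA
    exact hfrom A hA

end SimpleGraph

theorem partition_scheme_identity_general (n : ℕ)
    (T : SimpleGraph (Fin n) → SimpleGraph (Fin n))
    (E : SimpleGraph (Fin n) → Finset (Sym2 (Fin n)))
    (hT : ∀ g : SimpleGraph (Fin n), g.Connected → (T g).IsTree)
    (hEedge : ∀ t : SimpleGraph (Fin n), t.IsTree → ∀ e ∈ E t, ¬ e.IsDiag)
    (hEdisj : ∀ t : SimpleGraph (Fin n), t.IsTree → Disjoint (E t) t.edgeFinset)
    (hpart : ∀ t : SimpleGraph (Fin n), t.IsTree →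
      ∀ g : SimpleGraph (Fin n), g.Connected →
        (T g = t ↔ t.edgeFinset ⊆ g.edgeFinset ∧ g.edgeFinset ⊆ t.edgeFinset ∪ E t))
    (u : Sym2 (Fin n) → ℂ) :
    ∑ g ∈ Finset.univ.filter (fun g : SimpleGraph (Fin n) => g.Connected),
        ∏ e ∈ g.edgeFinset, (Complex.exp (-u e) - 1)
      = ∑ t ∈ Finset.univ.filter (fun t : SimpleGraph (Fin n) => t.IsTree),
          (∏ e ∈ t.edgeFinset, (Complex.exp (-u e) - 1)) *
            ∏ e ∈ E t, Complex.exp (-u e) := by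
  rw [← sum_fiberwise_of_maps_to (g := T) (t := univ.filter SimpleGraph.IsTree)
    (by simpa using hT)]
  refine sum_congr rfl fun t ht => ?_
  replace ht : t.IsTree := (mem_filter.1 ht).2
  have hfiber : {g ∈ univ.filter (fun g : SimpleGraph (Fin n) => g.Connected) | T g = t} =
      univ.filter (fun g => g.edgeFinset ∈ Icc t.edgeFinset (t.edgeFinset ∪ E t)) := by
    ext g
    simp only [mem_filter, mem_univ, true_and, mem_Icc]
    refine ⟨fun ⟨hg, hTg⟩ => (hpart t ht g hg).1 hTg, fun hg => ?_⟩
    have hconn : g.Connected :=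
      ht.connected.mono (SimpleGraph.edgeFinset_subset_edgeFinset.1 hg.1)
    exact ⟨hconn, (hpart t ht g hconn).2 hg⟩
  have hloopless : ∀ A ∈ Icc t.edgeFinset (t.edgeFinset ∪ E t), ∀ e ∈ A, ¬ e.IsDiag := by
    intro A hA e he
    rcases mem_union.1 ((mem_Icc.1 hA).2 he) with he | he
    · exact t.not_isDiag_of_mem_edgeSet (SimpleGraph.mem_edgeFinset.1 he)
    · exact hEedge t ht e he
  rw [hfiber, SimpleGraph.sum_filter_edgeFinset_mem hloopless
      (fun A => ∏ e ∈ A, (Complex.exp (-u e) - 1)),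
    sum_Icc_prod_eq_mul_prod_one_add subset_union_left,
    union_sdiff_cancel_left (hEdisj t ht).symm]
  simp only [add_sub_cancel]

/-- **Hamlet's lemma** for a partition scheme `(T, E)`: the sum over connected
graphs on `Fin n` equals a sum over spanning trees `t`, with the product over
the edges of `t` times the product of `e^{-u}` over the edges of `E t`.
A partition scheme is a map `T` from connected graphs to spanning trees
together with, for each spanning tree `t`, a set `E t` of edges of the
complete graph, disjoint from the edges of `t`, such that
`T⁻¹(t) = { g : t ⊆ g ⊆ t ∪ E t }`. -/
theorem partition_scheme_identity (n : ℕ) (hn : 1 ≤ n)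
    (T : SimpleGraph (Fin n) → SimpleGraph (Fin n))
    (E : SimpleGraph (Fin n) → Finset (Sym2 (Fin n)))
    (hT : ∀ g : SimpleGraph (Fin n), g.Connected → (T g).IsTree)
    (hEedge : ∀ t : SimpleGraph (Fin n), t.IsTree → ∀ e ∈ E t, ¬ e.IsDiag)
    (hEdisj : ∀ t : SimpleGraph (Fin n), t.IsTree → Disjoint (E t) t.edgeFinset)
    (hpart : ∀ t : SimpleGraph (Fin n), t.IsTree →
      ∀ g : SimpleGraph (Fin n), g.Connected →
        (T g = t ↔ t.edgeFinset ⊆ g.edgeFinset ∧ g.edgeFinset ⊆ t.edgeFinset ∪ E t))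
    (u : Sym2 (Fin n) → ℂ) :
    ∑ g ∈ Finset.univ.filter (fun g : SimpleGraph (Fin n) => g.Connected),
        ∏ e ∈ g.edgeFinset, (Complex.exp (-u e) - 1)
      = ∑ t ∈ Finset.univ.filter (fun t : SimpleGraph (Fin n) => t.IsTree),
          (∏ e ∈ t.edgeFinset, (Complex.exp (-u e) - 1)) *
            ∏ e ∈ E t, Complex.exp (-u e) :=
  partition_scheme_identity_general n T E hT hEedge hEdisj hpart u
end

section
/- Let n ≥ 1 and let (T, E) be a partition scheme on the graphs on {1,…,n}. Then for any real numbers u_{i,j} (1 ≤ i < j ≤ n), |∑_{g ∈ 𝒞_n} ∏_{ij ∈ g} (e^{−u_{i,j}} − 1)| ≤ ∑_{t ∈ 𝒯_n} ∏_{ij ∈ t} |e^{−u_{i,j}} − 1| · ∏_{ij ∈ E(t)} e^{−u_{i,j}}. -/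
/-!
Group the connected graphs `g` by their tree `T g`. Since a graph is determined by its edge set,
the fibre over a tree `t` is the interval `[t, t ∪ E(t)]` of edge sets, so with
`x_e = e^{-u_e} - 1` its sum factorises as `∏_{e ∈ t} x_e · ∏_{e ∈ E(t)} (1 + x_e)`, and
`1 + x_e = e^{-u_e} > 0`. The triangle inequality over the trees gives the bound.
-/

open scoped Classical

namespace Finset

theorem sum_Icc_union_prod {ι R : Type*} [DecidableEq ι] [CommSemiring R] {A E : Finset ι}
    (h : Disjoint A E) (w : ι → R) :
    ∑ s ∈ Icc A (A ∪ E), ∏ i ∈ s, w i = (∏ i ∈ A, w i) * ∏ i ∈ E, (1 + w i) := by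
  rw [Icc_eq_image_powerset subset_union_left, union_sdiff_cancel_left h, sum_image, prod_one_add,
    mul_sum]
  · exact sum_congr rfl fun S hS => prod_union (h.mono_right (mem_powerset.1 hS))
  · intro S hS S' hS' hSS'
    dsimp only at hSS'
    rw [← union_sdiff_cancel_left (h.mono_right (mem_powerset.1 hS)), hSS',
      union_sdiff_cancel_left (h.mono_right (mem_powerset.1 hS'))]

end Finset

namespace SimpleGraph

-- The `Fintype` instance is a plain implicit argument: the one synthesized for `fromEdgeSet`
-- differs from the generic `fintypeEdgeSet` met in the sums below.
theorem edgeFinset_fromEdgeSet_of_not_isDiag {V : Type*} {s : Finset (Sym2 V)}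
    {_ : Fintype (fromEdgeSet (s : Set (Sym2 V))).edgeSet} (hs : ∀ e ∈ s, ¬e.IsDiag) :
    (fromEdgeSet (s : Set (Sym2 V))).edgeFinset = s := by
  ext e
  simp only [mem_edgeFinset, edgeSet_fromEdgeSet, Set.mem_sdiff, Finset.mem_coe,
    Sym2.mem_diagSet]
  exact ⟨And.left, fun he => ⟨he, hs e he⟩⟩

theorem sum_edgeFinset_mem_Icc {V M : Type*} [Fintype V] [DecidableEq V] [AddCommMonoid M]
    (F : Finset (Sym2 V) → M) {A B : Finset (Sym2 V)} (hB : ∀ e ∈ B, ¬e.IsDiag) :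
    ∑ g ∈ Finset.univ.filter
        (fun g : SimpleGraph V => A ⊆ g.edgeFinset ∧ g.edgeFinset ⊆ B), F g.edgeFinset =
      ∑ s ∈ Finset.Icc A B, F s := by
  refine Finset.sum_nbij' (fun g => g.edgeFinset) (fun s => fromEdgeSet s) ?_ ?_ ?_ ?_ ?_
  · intro g hg
    rw [Finset.mem_filter] at hg
    exact Finset.mem_Icc.2 hg.2
  · intro s hs
    rw [Finset.mem_Icc] at hs
    rw [Finset.mem_filter, edgeFinset_fromEdgeSet_of_not_isDiag fun e he => hB e (hs.2 he)]
    exact ⟨Finset.mem_univ _, hs⟩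
  · intro g _
    rw [coe_edgeFinset, fromEdgeSet_edgeSet]
  · intro s hs
    exact edgeFinset_fromEdgeSet_of_not_isDiag fun e he => hB e ((Finset.mem_Icc.1 hs).2 he)
  · intro _ _
    rfl

theorem filter_connected_fiber_eq {V : Type*} [Fintype V] [DecidableEq V]
    {T : SimpleGraph V → SimpleGraph V} {t : SimpleGraph V} (ht : t.Connected)
    (E : Finset (Sym2 V))
    (hfiber : ∀ g : SimpleGraph V, g.Connected →
      (T g = t ↔ t.edgeFinset ⊆ g.edgeFinset ∧ g.edgeFinset ⊆ t.edgeFinset ∪ E)) :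
    (Finset.univ.filter (fun g : SimpleGraph V => g.Connected)).filter (fun g => T g = t) =
      Finset.univ.filter (fun g : SimpleGraph V =>
        t.edgeFinset ⊆ g.edgeFinset ∧ g.edgeFinset ⊆ t.edgeFinset ∪ E) := by
  rw [Finset.filter_filter]
  refine Finset.filter_congr fun g _ => ⟨fun ⟨hg, hTg⟩ => (hfiber g hg).1 hTg, fun hg => ?_⟩
  have hconn : g.Connected := ht.mono (edgeFinset_subset_edgeFinset.1 hg.1)
  exact ⟨hconn, (hfiber g hconn).2 hg⟩

end SimpleGraph

theorem partition_scheme_bound_general (n : ℕ)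
    (T : SimpleGraph (Fin n) → SimpleGraph (Fin n))
    (E : SimpleGraph (Fin n) → Finset (Sym2 (Fin n)))
    (hT : ∀ g : SimpleGraph (Fin n), g.Connected → (T g).IsTree)
    (hEedge : ∀ t : SimpleGraph (Fin n), t.IsTree → ∀ e ∈ E t, ¬ e.IsDiag)
    (hEdisj : ∀ t : SimpleGraph (Fin n), t.IsTree → Disjoint (E t) t.edgeFinset)
    (hpart : ∀ t : SimpleGraph (Fin n), t.IsTree →
      ∀ g : SimpleGraph (Fin n), g.Connected →
        (T g = t ↔ t.edgeFinset ⊆ g.edgeFinset ∧ g.edgeFinset ⊆ t.edgeFinset ∪ E t))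
    (u : Sym2 (Fin n) → ℝ) :
    |∑ g ∈ Finset.univ.filter (fun g : SimpleGraph (Fin n) => g.Connected),
        ∏ e ∈ g.edgeFinset, (Real.exp (-u e) - 1)|
      ≤ ∑ t ∈ Finset.univ.filter (fun t : SimpleGraph (Fin n) => t.IsTree),
          (∏ e ∈ t.edgeFinset, |Real.exp (-u e) - 1|) *
            ∏ e ∈ E t, Real.exp (-u e) := by
  have hmaps : ∀ g ∈ Finset.univ.filter (fun g : SimpleGraph (Fin n) => g.Connected),
      T g ∈ Finset.univ.filter (fun t : SimpleGraph (Fin n) => t.IsTree) := by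
    simpa using hT
  rw [← Finset.sum_fiberwise_of_maps_to hmaps]
  refine (Finset.abs_sum_le_sum_abs _ _).trans (Finset.sum_le_sum fun t ht => ?_)
  replace ht : t.IsTree := (Finset.mem_filter.1 ht).2
  have hdiag : ∀ e ∈ t.edgeFinset ∪ E t, ¬e.IsDiag := by
    intro e he
    rcases Finset.mem_union.1 he with he | he
    exacts [SimpleGraph.not_isDiag_of_mem_edgeFinset he, hEedge t ht e he]
  rw [SimpleGraph.filter_connected_fiber_eq ht.connected (E t) (hpart t ht),
    SimpleGraph.sum_edgeFinset_mem_Icc (fun s => ∏ e ∈ s, (Real.exp (-u e) - 1)) hdiag,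
    Finset.sum_Icc_union_prod (hEdisj t ht).symm]
  simp only [add_sub_cancel, abs_mul, Finset.abs_prod, Real.abs_exp, le_refl]

/-- Bound obtained from a partition scheme `(T, E)` (real case): the modulus of
the sum over connected graphs is bounded by the sum over spanning trees `t` of
`∏_{e ∈ t} |e^{-u_e} - 1| · ∏_{e ∈ E t} e^{-u_e}`. -/
theorem partition_scheme_bound (n : ℕ) (hn : 1 ≤ n)
    (T : SimpleGraph (Fin n) → SimpleGraph (Fin n))
    (E : SimpleGraph (Fin n) → Finset (Sym2 (Fin n)))
    (hT : ∀ g : SimpleGraph (Fin n), g.Connected → (T g).IsTree)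
    (hEedge : ∀ t : SimpleGraph (Fin n), t.IsTree → ∀ e ∈ E t, ¬ e.IsDiag)
    (hEdisj : ∀ t : SimpleGraph (Fin n), t.IsTree → Disjoint (E t) t.edgeFinset)
    (hpart : ∀ t : SimpleGraph (Fin n), t.IsTree →
      ∀ g : SimpleGraph (Fin n), g.Connected →
        (T g = t ↔ t.edgeFinset ⊆ g.edgeFinset ∧ g.edgeFinset ⊆ t.edgeFinset ∪ E t))
    (u : Sym2 (Fin n) → ℝ) :
    |∑ g ∈ Finset.univ.filter (fun g : SimpleGraph (Fin n) => g.Connected),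
        ∏ e ∈ g.edgeFinset, (Real.exp (-u e) - 1)|
      ≤ ∑ t ∈ Finset.univ.filter (fun t : SimpleGraph (Fin n) => t.IsTree),
          (∏ e ∈ t.edgeFinset, |Real.exp (-u e) - 1|) *
            ∏ e ∈ E t, Real.exp (-u e) :=
  partition_scheme_bound_general n T E hT hEedge hEdisj hpart u
end

section
/- Let n ≥ 1 and fix a linear order on the edges of the complete graph K_n on vertex set {1,…,n}. For each spanning tree t ∈ 𝒯_n, let E(t) denote the set of edges e ∉ t such that e is greater (in the fixed order) than every edge on the unique path in t between the endpoints of e. Then there exists a map T : 𝒞_n → 𝒯_n such that for every t ∈ 𝒯_n, T^{−1}(t) = { g ∈ 𝒞_n : t ⊆ g ⊆ t ∪ E(t) }; in other words, (T, E) is a partition scheme. (T is given by Kruskal's algorithm: T(g) is the spanning tree of g obtained by scanning the edges of g in increasing order and keeping each edge that does not create a cycle with the previously kept edges.) -/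
/-!
Weight each edge by its rank in the order and let `T g` be a connected spanning subgraph of `g` of
least weight. Minimality makes it a tree, and it makes every other edge `e` of `g` lie in `E(T g)`:
if the tree path between the ends of `e` had an edge `f > e`, exchanging `f` for `e` would give a
lighter connected spanning subgraph. Conversely, if two trees `t₁ ≠ t₂` both satisfy
`t ⊆ g ⊆ t ∪ E(t)`, let `e` be the least edge in which they differ, say `e ∈ t₁ \ t₂`. Then
`e ∈ E(t₂)`, so the `t₂`-path between its ends consists of smaller edges, which also lie in `t₁`,
and with `e` it closes a cycle in the tree `t₁`.
-/

open scoped Classical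

/-- For a fixed linear order `lo` on the edges, `kruskalE lo t e` says that `e`
is an edge of the complete graph, not an edge of the spanning tree `t`, which
is greater (for `lo`) than every edge on the (unique) path in `t` between the
endpoints of `e`. -/
def kruskalE {n : ℕ} (lo : LinearOrder (Sym2 (Fin n))) (t : SimpleGraph (Fin n))
    (e : Sym2 (Fin n)) : Prop :=
  ¬ e.IsDiag ∧ e ∉ t.edgeSet ∧
    ∀ i j : Fin n, e = s(i, j) → ∀ p : t.Path i j, ∀ f ∈ p.1.edges, lo.lt f e

open Finset

namespace SimpleGraph

variable {V : Type*}

lemma Connected.connected_sup_edge_deleteEdges {G : SimpleGraph V} (hG : G.Connected) {i j : V}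
    (hn : ¬G.Adj i j) {p : G.Walk i j} (hp : p.IsPath) {f : Sym2 V} (hf : f ∈ p.edges) :
    ((G ⊔ edge i j).deleteEdges {f}).Connected := by
  have hij : i ≠ j := by
    rintro rfl
    simp [Walk.edges_eq_nil.2 (Walk.isPath_iff_nil.1 hp)] at hf
  have hji : (G ⊔ edge i j).Adj j i := Or.inr (by simp [edge_adj, hij.symm])
  have hcycle : (Walk.cons hji (p.mapLe le_sup_left)).IsCycle := by
    refine (Walk.cons_isCycle_iff _ _).2 ⟨hp.mapLe _, fun h => hn ?_⟩
    rw [Walk.edges_mapLe_eq_edges, Sym2.eq_swap] at h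
    exact p.adj_of_mem_edges h
  obtain ⟨a, b⟩ := f
  refine (hG.mono le_sup_left).connected_delete_edge_of_not_isBridge fun hb =>
    hb.notMem_edges_of_isCycle hcycle ?_
  simp [hf]

section EdgeWeight

variable [Fintype V]

noncomputable def edgeWeight (r : Sym2 V → ℕ) (H : SimpleGraph V) : ℕ :=
  ∑ e ∈ H.edgeFinset, r e

variable {r : Sym2 V → ℕ}

lemma edgeWeight_strictMono (hr : ∀ e, 0 < r e) : StrictMono (edgeWeight r) := fun H K h => by
  obtain ⟨e, heK, heH⟩ := exists_of_ssubset (edgeFinset_strict_mono h)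
  exact sum_lt_sum_of_subset (edgeFinset_mono h.le) heK heH (hr e) fun _ _ _ => Nat.zero_le _

lemma edgeWeight_sup_edge {H : SimpleGraph V} {i j : V} (hn : ¬H.Adj i j) (hij : i ≠ j) :
    edgeWeight r (H ⊔ edge i j) = edgeWeight r H + r s(i, j) := by
  rw [edgeWeight, edgeWeight, add_comm, ← sum_cons (by simpa using hn)]
  congr 1
  convert edgeFinset_sup_edge H hn hij

lemma edgeWeight_deleteEdges_add {H : SimpleGraph V} {f : Sym2 V} (hf : f ∈ H.edgeSet) :
    edgeWeight r (H.deleteEdges {f}) + r f = edgeWeight r H := by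
  rw [edgeWeight, edgeWeight, ← sum_erase_add _ _ (mem_edgeFinset.2 hf)]
  congr 2
  ext e
  simp [and_comm]

end EdgeWeight

variable [Fintype V]

/-- The position of `e` in `lo`, counted from `1` so that ranks are positive weights. The order is
passed explicitly because `Sym2 V` already carries the inclusion order as an instance. -/
noncomputable def edgeRank (lo : LinearOrder (Sym2 V)) (e : Sym2 V) : ℕ := #{f | lo.le f e}

lemma edgeRank_pos (lo : LinearOrder (Sym2 V)) (e : Sym2 V) : 0 < edgeRank lo e :=
  card_pos.2 ⟨e, by simp⟩

lemma edgeRank_lt_edgeRank_iff (lo : LinearOrder (Sym2 V)) {e f : Sym2 V} :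
    edgeRank lo e < edgeRank lo f ↔ lo.lt e f := by
  have hmono : ∀ {e f}, lo.le e f → edgeRank lo e ≤ edgeRank lo f := fun hef =>
    card_le_card <| monotone_filter_right _ fun _ _ h => lo.le_trans _ _ _ h hef
  refine ⟨fun h => (@lt_or_ge _ lo e f).resolve_right fun hfe => (hmono hfe).not_gt h,
    fun hef => card_lt_card <| (ssubset_iff_of_subset <| monotone_filter_right _
      fun _ _ h => lo.le_trans _ _ _ h (@le_of_lt _ lo.toPreorder _ _ hef)).2 ⟨f, ?_⟩⟩
  simp only [mem_filter, mem_univ, true_and]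
  exact ⟨lo.le_refl f, (@not_le _ lo _ _).2 hef⟩

lemma edgeRank_injective (lo : LinearOrder (Sym2 V)) : Function.Injective (edgeRank lo) := by
  intro e f h
  rcases @lt_trichotomy _ lo e f with hef | hef | hfe
  · exact absurd h ((edgeRank_lt_edgeRank_iff lo).2 hef).ne
  · exact hef
  · exact absurd h ((edgeRank_lt_edgeRank_iff lo).2 hfe).ne'

variable {n : ℕ} (lo : LinearOrder (Sym2 (Fin n)))

def IsKruskalTree (g t : SimpleGraph (Fin n)) : Prop :=
  t.IsTree ∧ t ≤ g ∧ ∀ e ∈ g.edgeSet, e ∈ t.edgeSet ∨ kruskalE lo t e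

variable {lo}

theorem exists_isKruskalTree {g : SimpleGraph (Fin n)} (hg : g.Connected) :
    ∃ t, IsKruskalTree lo g t := by
  obtain ⟨t, ⟨htg, htc⟩, hmin⟩ := Set.exists_min_image {H | H ≤ g ∧ H.Connected}
    (edgeWeight (edgeRank lo)) (Set.toFinite _) ⟨g, le_rfl, hg⟩
  have htree : t.IsTree := isTree_of_minimal_connected ⟨htc, fun H hH hHt => by
    by_contra hne
    exact (hmin H ⟨hHt.trans htg, hH⟩).not_gt
      (edgeWeight_strictMono (edgeRank_pos lo) (lt_of_le_not_ge hHt hne))⟩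
  refine ⟨t, htree, htg, fun e he => or_iff_not_imp_left.2 fun het =>
    ⟨g.not_isDiag_of_mem_edgeSet he, het, ?_⟩⟩
  rintro i j rfl p f hf
  have hn : ¬t.Adj i j := het
  have hft : f ∈ t.edgeSet := p.1.edges_subset_edgeSet hf
  set t' := (t ⊔ edge i j).deleteEdges {f}
  have hle : edgeWeight (edgeRank lo) t ≤ edgeWeight (edgeRank lo) t' :=
    hmin t' ⟨(deleteEdges_le _).trans (sup_le htg ((edge_le_iff _).2 (Or.inr he))),
      htc.connected_sup_edge_deleteEdges hn p.2 hf⟩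
  have hweight : edgeWeight (edgeRank lo) t' + edgeRank lo f =
      edgeWeight (edgeRank lo) t + edgeRank lo s(i, j) := by
    rw [← edgeWeight_sup_edge hn he.ne]
    exact edgeWeight_deleteEdges_add (edgeSet_mono le_sup_left hft)
  refine (edgeRank_lt_edgeRank_iff lo).1 (lt_of_le_of_ne (by omega) ((edgeRank_injective lo).ne ?_))
  rintro rfl
  exact het hft

lemma IsKruskalTree.mem_edgeSet_of_forall_lt {g t t' : SimpleGraph (Fin n)} (ht : t.IsAcyclic)
    (htg : t ≤ g) (ht' : IsKruskalTree lo g t') {e : Sym2 (Fin n)} (he : e ∈ t.edgeSet)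
    (hlt : ∀ f, lo.lt f e → f ∈ t'.edgeSet → f ∈ t.edgeSet) : e ∈ t'.edgeSet := by
  obtain ⟨i, j⟩ := e
  refine (ht'.2.2 _ (edgeSet_mono htg he)).resolve_right fun ⟨_, he', hE⟩ => he' ?_
  obtain ⟨p⟩ := ht'.1.connected.preconnected i j
  have hsub : ∀ f ∈ p.toPath.1.edges, f ∈ t.edgeSet := fun f hf =>
    hlt f (hE i j rfl p.toPath f hf) (p.toPath.1.edges_subset_edgeSet hf)
  -- `ij` is a bridge of the forest `t`, so it lies on the copy of the `t'`-path inside `t`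
  have hmem := isBridge_iff_forall_walk_mem_edges.1 (isAcyclic_iff_forall_isBridge.1 ht he)
    (p.toPath.1.transfer t hsub)
  rw [Walk.edges_transfer] at hmem
  exact p.toPath.1.edges_subset_edgeSet hmem

theorem IsKruskalTree.unique {g t₁ t₂ : SimpleGraph (Fin n)} (h₁ : IsKruskalTree lo g t₁)
    (h₂ : IsKruskalTree lo g t₂) : t₁ = t₂ := by
  by_contra hne
  obtain ⟨e₀, he₀⟩ : ∃ e, ¬(e ∈ t₁.edgeSet ↔ e ∈ t₂.edgeSet) := by
    by_contra! h
    exact hne (edgeSet_inj.1 (Set.ext h))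
  obtain ⟨e, he, hmin⟩ := exists_min_image {e | ¬(e ∈ t₁.edgeSet ↔ e ∈ t₂.edgeSet)}
    (edgeRank lo) ⟨e₀, by simpa using he₀⟩
  have hagree : ∀ f, lo.lt f e → (f ∈ t₁.edgeSet ↔ f ∈ t₂.edgeSet) := fun f hf => by
    by_contra h
    exact (hmin f (by simpa using h)).not_gt ((edgeRank_lt_edgeRank_iff lo).2 hf)
  simp only [mem_filter, mem_univ, true_and] at he
  by_cases h : e ∈ t₁.edgeSet
  · exact he (iff_of_true h
      (h₂.mem_edgeSet_of_forall_lt h₁.1.isAcyclic h₁.2.1 h fun f hf => (hagree f hf).2))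
  · exact he (iff_of_false h fun h' =>
      h (h₁.mem_edgeSet_of_forall_lt h₂.1.isAcyclic h₂.2.1 h' fun f hf => (hagree f hf).1))

end SimpleGraph

theorem kruskal_partition_scheme_general (n : ℕ)
    (lo : LinearOrder (Sym2 (Fin n))) :
    ∃ T : SimpleGraph (Fin n) → SimpleGraph (Fin n),
      (∀ g : SimpleGraph (Fin n), g.Connected → (T g).IsTree) ∧
      ∀ t : SimpleGraph (Fin n), t.IsTree →
        ∀ g : SimpleGraph (Fin n), g.Connected →
          (T g = t ↔ t ≤ g ∧ ∀ e ∈ g.edgeSet, e ∈ t.edgeSet ∨ kruskalE lo t e) := by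
  have hT {g : SimpleGraph (Fin n)} (hg : g.Connected) :
      SimpleGraph.IsKruskalTree lo g (Classical.epsilon (SimpleGraph.IsKruskalTree lo g)) :=
    Classical.epsilon_spec (SimpleGraph.exists_isKruskalTree hg)
  refine ⟨fun g => Classical.epsilon (SimpleGraph.IsKruskalTree lo g), fun g hg => (hT hg).1,
    fun t ht g hg => ⟨?_, fun h => (hT hg).unique ⟨ht, h⟩⟩⟩
  rintro rfl
  exact (hT hg).2

/-- **Kruskal's algorithm yields a partition scheme**: there is a map `T` from
connected graphs on `Fin n` to spanning trees such that, for every spanning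
tree `t`, the fiber `T⁻¹(t)` consists exactly of the connected graphs `g` with
`t ⊆ g ⊆ t ∪ E(t)`, where `E(t)` is the set of edges described by
`kruskalE lo t`. -/
theorem kruskal_partition_scheme (n : ℕ) (hn : 1 ≤ n)
    (lo : LinearOrder (Sym2 (Fin n))) :
    ∃ T : SimpleGraph (Fin n) → SimpleGraph (Fin n),
      (∀ g : SimpleGraph (Fin n), g.Connected → (T g).IsTree) ∧
      ∀ t : SimpleGraph (Fin n), t.IsTree →
        ∀ g : SimpleGraph (Fin n), g.Connected →
          (T g = t ↔ t ≤ g ∧ ∀ e ∈ g.edgeSet, e ∈ t.edgeSet ∨ kruskalE lo t e) :=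
  kruskal_partition_scheme_general n lo
end

section
/- Let n ≥ 1, let u_{i,j} ∈ ℝ (1 ≤ i < j ≤ n), and fix a linear order on the edges of K_n along which u is nondecreasing (i.e., if edge e precedes edge f then u_e ≤ u_f). Let t ∈ 𝒯_n be a spanning tree, let E(t) be the set of edges e ∉ t such that e is greater than every edge on the unique path in t between the endpoints of e, and let t_- be the forest consisting of those edges of t with u_{i,j} < 0. Then ∑_{ij ∈ t_-} u_{i,j} + ∑_{ij ∈ E(t)} u_{i,j} ≥ ∑_{{i,j}} u_{i,j}, where the last sum ranges over all pairs i < j such that i and j lie in the same connected component of the forest t_-. -/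
open scoped Classical

/-- The spanning forest `t_-` : the subgraph of `t` consisting of the edges of
negative weight. -/
def negForest {n : ℕ} (t : SimpleGraph (Fin n)) (u : Sym2 (Fin n) → ℝ) :
    SimpleGraph (Fin n) where
  Adj i j := t.Adj i j ∧ u s(i, j) < 0
  symm := ⟨fun i j h => ⟨h.1.symm, by rw [Sym2.eq_swap]; exact h.2⟩⟩
  loopless := ⟨fun i h => t.loopless.irrefl i h.1⟩

/-!
Let `S` be the set of pairs joined in `t_-`, `A` the edge set of `t_-` and `B = E(t)`.
Since `A ⊆ S` and `A ∩ B = ∅`, it suffices that `u ≤ 0` on `S \ (A ∪ B)` and `u ≥ 0` on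
`B \ S`. Both come from the `t`-path `P` between the endpoints of an edge `e`. If they are
joined in `t_-`, then `P` lies in `t_-` because `t` is acyclic, so when `e ∉ E(t)` some
`f ∈ P` with `e ≤ f` gives `u e ≤ u f < 0`. If they are not joined, some `f ∈ P` has
`u f ≥ 0`, and `e ∈ E(t)` gives `f < e`, hence `u e ≥ u f ≥ 0`.
-/
theorem Finset.sum_le_sum_of_nonpos_of_nonneg {ι M : Type*} [AddCommMonoid M] [Preorder M]
    [AddLeftMono M] {s t : Finset ι} {f : ι → M}
    (hs : ∀ i ∈ s, i ∉ t → f i ≤ 0) (ht : ∀ i ∈ t, i ∉ s → 0 ≤ f i) :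
    ∑ i ∈ s, f i ≤ ∑ i ∈ t, f i :=
  calc ∑ i ∈ s, f i ≤ ∑ i ∈ s ∩ t, f i :=
        sum_le_sum_of_subset_of_nonpos' inter_subset_left fun i hi hi' =>
          hs i hi fun hit => hi' (mem_inter.2 ⟨hi, hit⟩)
    _ ≤ ∑ i ∈ t, f i :=
        sum_le_sum_of_subset_of_nonneg inter_subset_right fun i hi hi' =>
          ht i hi fun his => hi' (mem_inter.2 ⟨his, hi⟩)

theorem Sym2.injOn_mk_of_lt {α : Type*} [LinearOrder α] :
    Set.InjOn (fun p : α × α => s(p.1, p.2)) {p | p.1 < p.2} := by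
  rintro ⟨a, b⟩ hab ⟨c, d⟩ hcd h
  rcases Sym2.eq_iff.1 h with ⟨rfl, rfl⟩ | ⟨rfl, rfl⟩
  · rfl
  · exact absurd hab (lt_asymm hcd)

theorem Sym2.mk_mem_image_filter_lt_iff {α : Type*} [LinearOrder α] [Fintype α]
    {r : α → α → Prop} [DecidableRel r] (hr : ∀ ⦃a b⦄, r a b → r b a) {i j : α} :
    s(i, j) ∈ (Finset.univ.filter fun p : α × α => p.1 < p.2 ∧ r p.1 p.2).image
        (fun p => s(p.1, p.2)) ↔ i ≠ j ∧ r i j := by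
  simp only [Finset.mem_image, Finset.mem_filter, Finset.mem_univ, true_and, Prod.exists,
    Sym2.eq_iff]
  constructor
  · rintro ⟨a, b, ⟨hab, hr'⟩, ⟨rfl, rfl⟩ | ⟨rfl, rfl⟩⟩
    exacts [⟨hab.ne, hr'⟩, ⟨hab.ne', hr hr'⟩]
  · rintro ⟨hij, hr'⟩
    rcases hij.lt_or_gt with h | h
    · exact ⟨i, j, ⟨h, hr'⟩, .inl ⟨rfl, rfl⟩⟩
    · exact ⟨j, i, ⟨h, hr hr'⟩, .inr ⟨rfl, rfl⟩⟩

namespace SimpleGraph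

theorem IsAcyclic.reachable_iff_forall_mem_edgeSet {V : Type*} {G H : SimpleGraph V}
    (hG : G.IsAcyclic) (hHG : H ≤ G) {i j : V} {p : G.Walk i j} (hp : p.IsPath) :
    H.Reachable i j ↔ ∀ e ∈ p.edges, e ∈ H.edgeSet := by
  refine ⟨fun ⟨w⟩ => ?_, fun h => ⟨p.transfer H h⟩⟩
  have hq : ∀ e ∈ w.toPath.1.edges, e ∈ G.edgeSet := fun e he =>
    edgeSet_mono hHG (w.toPath.1.edges_subset_edgeSet he)
  have : p = w.toPath.1.transfer G hq :=
    congrArg Subtype.val <|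
      (hG.subsingleton_path i j).elim ⟨p, hp⟩ ⟨_, w.toPath.2.transfer hq⟩
  rw [this, Walk.edges_transfer]
  exact w.toPath.1.edges_subset_edgeSet

end SimpleGraph

section KruskalKeyInequality

variable {n : ℕ} {t : SimpleGraph (Fin n)} {u : Sym2 (Fin n) → ℝ}
  {lo : LinearOrder (Sym2 (Fin n))}

theorem negForest_le : negForest t u ≤ t := fun _ _ h => h.1

theorem mem_negForest_edgeSet {e : Sym2 (Fin n)} :
    e ∈ (negForest t u).edgeSet ↔ e ∈ t.edgeSet ∧ u e < 0 := by
  induction e using Sym2.ind with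
  | _ i j => rfl

theorem weight_nonpos_of_reachable_negForest (ht : t.IsAcyclic)
    (hmono : ∀ e f, lo.le e f → u e ≤ u f) {i j : Fin n} (hij : i ≠ j)
    (hr : (negForest t u).Reachable i j) (hA : s(i, j) ∉ (negForest t u).edgeSet)
    (hB : ¬ kruskalE lo t s(i, j)) : u s(i, j) ≤ 0 := by
  by_cases het : s(i, j) ∈ t.edgeSet
  · have hpath := (SimpleGraph.Path.singleton het).2
    exact absurd ((ht.reachable_iff_forall_mem_edgeSet negForest_le hpath).1 hr _
      (SimpleGraph.Path.mk'_mem_edges_singleton het)) hA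
  · obtain ⟨i', j', he, p, f, hf, hef⟩ : ∃ i' j', s(i, j) = s(i', j') ∧
        ∃ p : t.Path i' j', ∃ f ∈ p.1.edges, lo.le s(i, j) f := by
      simpa [kruskalE, hij, het, @not_lt _ lo] using hB
    have hr' : (negForest t u).Reachable i' j' := by
      rcases Sym2.eq_iff.1 he with ⟨rfl, rfl⟩ | ⟨rfl, rfl⟩
      exacts [hr, hr.symm]
    have hfA := (ht.reachable_iff_forall_mem_edgeSet negForest_le p.2).1 hr' f hf
    have hfneg : u f < 0 := (mem_negForest_edgeSet.1 hfA).2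
    exact (hmono _ _ hef).trans hfneg.le

theorem weight_nonneg_of_kruskalE (ht : t.IsTree) (hmono : ∀ e f, lo.le e f → u e ≤ u f)
    {i j : Fin n} (hB : kruskalE lo t s(i, j)) (hr : ¬ (negForest t u).Reachable i j) :
    0 ≤ u s(i, j) := by
  obtain ⟨w⟩ := ht.connected.preconnected i j
  obtain ⟨f, hf, hfA⟩ : ∃ f ∈ w.toPath.1.edges, f ∉ (negForest t u).edgeSet := by
    simpa using mt (ht.isAcyclic.reachable_iff_forall_mem_edgeSet negForest_le w.toPath.2).2 hr
  have hf0 : 0 ≤ u f := le_of_not_gt fun hneg =>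
    hfA (mem_negForest_edgeSet.2 ⟨w.toPath.1.edges_subset_edgeSet hf, hneg⟩)
  have hfe : lo.lt f s(i, j) := hB.2.2 i j rfl w.toPath f hf
  exact hf0.trans (hmono _ _ (@le_of_lt _ lo.toPreorder _ _ hfe))

end KruskalKeyInequality

theorem kruskal_key_inequality_general (n : ℕ)
    (u : Sym2 (Fin n) → ℝ)
    (lo : LinearOrder (Sym2 (Fin n))) (hmono : ∀ e f, lo.le e f → u e ≤ u f)
    (t : SimpleGraph (Fin n)) (ht : t.IsTree) :
    ∑ p ∈ Finset.univ.filter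
        (fun p : Fin n × Fin n => p.1 < p.2 ∧ (negForest t u).Reachable p.1 p.2),
        u s(p.1, p.2)
      ≤ (∑ e ∈ (negForest t u).edgeFinset, u e)
        + ∑ e ∈ Finset.univ.filter (kruskalE lo t), u e := by
  have hAB : Disjoint (negForest t u).edgeFinset (Finset.univ.filter (kruskalE lo t)) :=
    Finset.disjoint_left.2 fun _ hA hB => (Finset.mem_filter.1 hB).2.2.1
      (mem_negForest_edgeSet.1 (SimpleGraph.mem_edgeFinset.1 hA)).1
  have hS {i j : Fin n} := Sym2.mk_mem_image_filter_lt_iff (i := i) (j := j)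
    (r := (negForest t u).Reachable) fun _ _ h => h.symm
  rw [← Finset.sum_image (Sym2.injOn_mk_of_lt.mono fun p hp => (Finset.mem_filter.1 hp).2.1),
    ← Finset.sum_union hAB]
  refine Finset.sum_le_sum_of_nonpos_of_nonneg (Sym2.ind fun i j he heAB => ?_)
    (Sym2.ind fun i j heAB he => ?_)
  · rw [hS] at he
    simp only [Finset.mem_union, SimpleGraph.mem_edgeFinset, Finset.mem_filter, Finset.mem_univ,
      true_and, not_or] at heAB
    exact weight_nonpos_of_reachable_negForest ht.isAcyclic hmono he.1 he.2 heAB.1 heAB.2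
  · rw [hS] at he
    simp only [Finset.mem_union, SimpleGraph.mem_edgeFinset, SimpleGraph.mem_edgeSet,
      Finset.mem_filter, Finset.mem_univ, true_and] at heAB
    rcases heAB with hA | hB
    · exact absurd ⟨hA.ne, hA.reachable⟩ he
    · exact weight_nonneg_of_kruskalE ht hmono hB fun hr =>
        he ⟨Sym2.mk_isDiag_iff.not.1 hB.1, hr⟩

/-- **Key inequality** (Procacci–Yuhjtman): for a spanning tree `t` and an
edge order along which `u` is nondecreasing,
`∑_{e ∈ t_-} u_e + ∑_{e ∈ E(t)} u_e ≥ ∑ u_{i,j}`, where the last sum is over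
pairs `i < j` lying in the same connected component of the forest `t_-`. -/
theorem kruskal_key_inequality (n : ℕ) (hn : 1 ≤ n)
    (u : Sym2 (Fin n) → ℝ)
    (lo : LinearOrder (Sym2 (Fin n))) (hmono : ∀ e f, lo.le e f → u e ≤ u f)
    (t : SimpleGraph (Fin n)) (ht : t.IsTree) :
    ∑ p ∈ Finset.univ.filter
        (fun p : Fin n × Fin n => p.1 < p.2 ∧ (negForest t u).Reachable p.1 p.2),
        u s(p.1, p.2)
      ≤ (∑ e ∈ (negForest t u).edgeFinset, u e)
        + ∑ e ∈ Finset.univ.filter (kruskalE lo t), u e :=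
  kruskal_key_inequality_general n u lo hmono t ht
end

section
/- Let n ≥ 1 and let u_{i,j} ∈ ℝ and b_i ∈ [0,∞) satisfy the stability condition: for every subset I ⊆ {1,…,n}, ∑_{i,j ∈ I, i<j} u_{i,j} ≥ −∑_{i ∈ I} b_i. Fix a linear order on the edges of K_n along which u is nondecreasing, let t ∈ 𝒯_n be a spanning tree, and let E(t) be the set of edges e ∉ t such that e is greater than every edge on the unique path in t between the endpoints of e. Then ∏_{ij ∈ t} |e^{−u_{i,j}} − 1| · ∏_{ij ∈ E(t)} e^{−u_{i,j}} ≤ e^{∑_{i=1}^n b_i} · ∏_{ij ∈ t} (1 − e^{−|u_{i,j}|}). -/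
open scoped Classical

/-!
Since `|e^{-x} - 1| = e^{max(-x, 0)} (1 - e^{-|x|})`, the claim reduces to
`-∑ b ≤ ∑_{e ∈ P} u_e`, where `P` consists of the tree edges with `u < 0` together with
`E(t)`. Let `H` be the graph of the edges of `P` with `u < 0`. Stability on each connected
component of `H` bounds `-∑ b` by the sum of `u` over all edges inside components. Edges of `P`
joining two components have `u ≥ 0`, and an edge `e ∉ P` inside a component has `u_e ≤ 0`:
otherwise every edge of `H` is smaller than `e`, so by the defining property of `E(t)` its
endpoints are joined by tree edges smaller than `e`; hence so are the endpoints of `e`, which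
puts `e` in `E(t)`.
-/

open Finset

section Stability

variable {V : Type*} [Fintype V] [LinearOrder V]

theorem sum_pairs_lt_eq_sum_not_isDiag (Q : Sym2 V → Prop) [DecidablePred Q]
    (f : Sym2 V → ℝ) :
    ∑ p ∈ univ.filter (fun p : V × V => p.1 < p.2 ∧ Q s(p.1, p.2)), f s(p.1, p.2) =
      ∑ e ∈ univ.filter (fun e : Sym2 V => ¬e.IsDiag ∧ Q e), f e := by
  have h := sum_sym2_filter_not_isDiag (univ : Finset V) (fun e => if Q e then f e else 0)
  rw [sum_filter, sum_filter] at h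
  rw [sum_filter, sum_filter]
  simp only [sym2_univ, ite_and] at h ⊢
  rw [h]
  refine (sum_subset (subset_univ _) fun p _ hp => ?_).symm
  simp_all

def IsStable (b : V → ℝ) (u : Sym2 V → ℝ) : Prop :=
  ∀ I : Finset V,
    -∑ i ∈ I, b i ≤ ∑ p ∈ (I ×ˢ I).filter (fun p : V × V => p.1 < p.2), u s(p.1, p.2)

theorem IsStable.neg_sum_le_sum_fiberwise {κ : Type*} {b : V → ℝ} {u : Sym2 V → ℝ}
    (hstab : IsStable b u) (c : V → κ) :
    -∑ i, b i ≤
      ∑ e ∈ univ.filter (fun e : Sym2 V => ¬e.IsDiag ∧ (e.map c).IsDiag), u e := by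
  rw [← sum_pairs_lt_eq_sum_not_isDiag (fun e => (e.map c).IsDiag)]
  simp only [Sym2.map_mk, Sym2.mk_isDiag_iff]
  rw [← sum_fiberwise_of_maps_to (t := univ.image c) (g := c)
      (fun i _ => mem_image_of_mem c (mem_univ i)),
    ← sum_fiberwise_of_maps_to (t := univ.image c) (g := fun p : V × V => c p.1)
      (fun p _ => mem_image_of_mem c (mem_univ p.1)), ← sum_neg_distrib]
  refine sum_le_sum fun k _ => ?_
  refine (hstab _).trans_eq (sum_congr ?_ fun _ _ => rfl)
  ext p
  simp only [mem_filter, mem_univ, true_and, mem_product]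
  constructor
  · rintro ⟨⟨h1, h2⟩, hlt⟩
    exact ⟨⟨hlt, h1.trans h2.symm⟩, h1⟩
  · rintro ⟨⟨hlt, hc⟩, rfl⟩
    exact ⟨⟨rfl, hc.symm⟩, hlt⟩

theorem IsStable.neg_sum_le_sum_of_closed {b : V → ℝ} {u : Sym2 V → ℝ}
    (hstab : IsStable b u) (S : Finset (Sym2 V)) (hS : ∀ e ∈ S, ¬e.IsDiag)
    (hclosed : ∀ x y, x ≠ y →
      (SimpleGraph.fromEdgeSet {e | e ∈ S ∧ u e < 0}).Reachable x y → s(x, y) ∉ S →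
        u s(x, y) ≤ 0) :
    -∑ i, b i ≤ ∑ e ∈ S, u e := by
  set H := SimpleGraph.fromEdgeSet {e | e ∈ S ∧ u e < 0}
  set W := univ.filter fun e : Sym2 V => ¬e.IsDiag ∧ (e.map H.connectedComponentMk).IsDiag
  have hW : ∀ x y, s(x, y) ∈ W ↔ x ≠ y ∧ H.Reachable x y := by
    simp [W, SimpleGraph.ConnectedComponent.eq]
  calc -∑ i, b i ≤ ∑ e ∈ W, u e := hstab.neg_sum_le_sum_fiberwise _
    _ ≤ ∑ e ∈ W.filter (· ∈ S), u e := by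
      rw [← sum_filter_add_sum_filter_not W (· ∈ S)]
      have : ∑ e ∈ W.filter (· ∉ S), u e ≤ 0 := by
        refine sum_nonpos fun e he => ?_
        induction e using Sym2.ind with
        | _ x y =>
          obtain ⟨hxyW, hxyS⟩ := mem_filter.1 he
          exact hclosed x y ((hW x y).1 hxyW).1 ((hW x y).1 hxyW).2 hxyS
      linarith
    _ ≤ ∑ e ∈ S, u e := by
      refine sum_le_sum_of_subset_of_nonneg (fun e he => (mem_filter.1 he).2) fun e heS heW => ?_
      by_contra! hneg
      induction e using Sym2.ind with
      | _ x y =>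
        have hadj : H.Adj x y := by
          simpa [H] using ⟨⟨heS, hneg⟩, fun h => hS _ heS (Sym2.mk_isDiag_iff.2 h)⟩
        exact heW (mem_filter.2 ⟨(hW x y).2 ⟨hadj.ne, hadj.reachable⟩, heS⟩)

end Stability

theorem SimpleGraph.reachable_le_of_adj_le {V : Type*} {G G' : SimpleGraph V}
    (h : G.Adj ≤ G'.Reachable) : G.Reachable ≤ G'.Reachable := by
  rw [SimpleGraph.reachable_eq_reflTransGen, SimpleGraph.reachable_eq_reflTransGen] at *
  exact Relation.reflTransGen_closed h

section Kruskal

-- `Sym2` carries its own partial order, so comparisons for `lo` are written as `lo.lt`.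
variable {n : ℕ} (lo : LinearOrder (Sym2 (Fin n)))

def belowGraph (t : SimpleGraph (Fin n)) (g : Sym2 (Fin n)) : SimpleGraph (Fin n) :=
  SimpleGraph.fromEdgeSet {f | f ∈ t.edgeSet ∧ lo.lt f g}

noncomputable def treeNegUnionE (t : SimpleGraph (Fin n)) (u : Sym2 (Fin n) → ℝ) :
    Finset (Sym2 (Fin n)) :=
  t.edgeFinset.filter (u · < 0) ∪ univ.filter (kruskalE lo t)

variable {t : SimpleGraph (Fin n)}

theorem not_isDiag_of_mem_treeNegUnionE {u : Sym2 (Fin n) → ℝ} {e : Sym2 (Fin n)}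
    (he : e ∈ treeNegUnionE lo t u) : ¬e.IsDiag :=
  (mem_union.1 he).elim
    (fun htree => t.not_isDiag_of_mem_edgeSet (SimpleGraph.mem_edgeFinset.1 (mem_filter.1 htree).1))
    (fun hk => (mem_filter.1 hk).2.1)

theorem reachable_belowGraph_of_kruskalE (ht : t.Preconnected) {a c : Fin n} {g : Sym2 (Fin n)}
    (hk : kruskalE lo t s(a, c)) (hlt : lo.lt s(a, c) g) : (belowGraph lo t g).Reachable a c := by
  obtain ⟨w⟩ := ht a c
  refine (w.toPath.1.transfer _ fun f hf => ?_).reachable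
  have hft : f ∈ t.edgeSet := w.toPath.1.edges_subset_edgeSet hf
  rw [belowGraph, SimpleGraph.edgeSet_fromEdgeSet]
  exact ⟨⟨hft, @lt_trans _ lo.toPreorder _ _ _ (hk.2.2 a c rfl _ f hf) hlt⟩,
    t.not_isDiag_of_mem_edgeSet hft⟩

theorem kruskalE_of_reachable_belowGraph (ht : t.IsAcyclic) {x y : Fin n} (hxy : x ≠ y)
    (h : (belowGraph lo t s(x, y)).Reachable x y) : kruskalE lo t s(x, y) := by
  obtain ⟨w⟩ := h
  have hbelow : ∀ f ∈ w.toPath.1.edges, f ∈ t.edgeSet ∧ lo.lt f s(x, y) := fun f hf => by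
    have hf' := w.toPath.1.edges_subset_edgeSet hf
    rw [belowGraph, SimpleGraph.edgeSet_fromEdgeSet] at hf'
    exact hf'.1
  let q : t.Path x y := ⟨_, w.toPath.2.transfer fun f hf => (hbelow f hf).1⟩
  have hq : ∀ f ∈ q.1.edges, lo.lt f s(x, y) := fun f hf => by
    rw [SimpleGraph.Walk.edges_transfer] at hf
    exact (hbelow f hf).2
  refine ⟨Sym2.mk_isDiag_iff.not.2 hxy, fun hxyt => ?_, fun i j hij r f hf => ?_⟩
  · have hsingle := SimpleGraph.Path.mk'_mem_edges_singleton (G := t) hxyt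
    rw [(ht.subsingleton_path x y).elim (SimpleGraph.Path.singleton hxyt) q] at hsingle
    exact @lt_irrefl _ lo.toPreorder _ (hq _ hsingle)
  · rcases Sym2.eq_iff.1 hij with ⟨rfl, rfl⟩ | ⟨rfl, rfl⟩
    · rw [(ht.subsingleton_path _ _).elim r q] at hf
      exact hq f hf
    · rw [(ht.subsingleton_path _ _).elim r q.reverse, SimpleGraph.Path.reverse_coe,
        SimpleGraph.Walk.edges_reverse, List.mem_reverse] at hf
      exact hq f hf

theorem nonpos_of_reachable_of_notMem_treeNegUnionE (ht : t.IsTree) {u : Sym2 (Fin n) → ℝ}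
    (hmono : ∀ e f, lo.le e f → u e ≤ u f) {x y : Fin n} (hxy : x ≠ y)
    (hr : (SimpleGraph.fromEdgeSet {e | e ∈ treeNegUnionE lo t u ∧ u e < 0}).Reachable x y)
    (hxyS : s(x, y) ∉ treeNegUnionE lo t u) : u s(x, y) ≤ 0 := by
  by_contra! hpos
  have hlt : ∀ f, u f < 0 → lo.lt f s(x, y) := fun f hf =>
    @lt_of_not_ge _ lo _ _ fun hle => (hmono _ _ hle).not_gt (hf.trans hpos)
  have hbelow : (belowGraph lo t s(x, y)).Reachable x y := by
    refine SimpleGraph.reachable_le_of_adj_le (fun a c hac => ?_) x y hr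
    obtain ⟨⟨hmem, hneg⟩, hne⟩ := (SimpleGraph.fromEdgeSet_adj _).1 hac
    rcases mem_union.1 hmem with htree | hk
    · have htree' := SimpleGraph.mem_edgeFinset.1 (mem_filter.1 htree).1
      have hadj : (belowGraph lo t s(x, y)).Adj a c :=
        (SimpleGraph.fromEdgeSet_adj _).2 ⟨⟨htree', hlt _ hneg⟩, hne⟩
      exact hadj.reachable
    · exact reachable_belowGraph_of_kruskalE lo ht.connected.preconnected
        (mem_filter.1 hk).2 (hlt _ hneg)
  exact hxyS (mem_union_right _
    (mem_filter.2 ⟨mem_univ _, kruskalE_of_reachable_belowGraph lo ht.isAcyclic hxy hbelow⟩))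

end Kruskal

theorem abs_exp_neg_sub_one (x : ℝ) :
    |Real.exp (-x) - 1| = (if x < 0 then Real.exp (-x) else 1) * (1 - Real.exp (-|x|)) := by
  split_ifs with hx
  · rw [abs_of_pos (by linarith [Real.one_lt_exp_iff.2 (neg_pos.2 hx)]), abs_of_neg hx, neg_neg,
      mul_sub, ← Real.exp_add, neg_add_cancel, Real.exp_zero, mul_one]
  · rw [abs_of_nonpos (by linarith [Real.exp_le_one_iff.2 (neg_nonpos.2 (not_lt.1 hx))]),
      abs_of_nonneg (not_lt.1 hx)]
    ring

theorem prod_abs_exp_sub_one_mul_prod_kruskalE {n : ℕ} (lo : LinearOrder (Sym2 (Fin n)))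
    (t : SimpleGraph (Fin n)) (u : Sym2 (Fin n) → ℝ) :
    (∏ e ∈ t.edgeFinset, |Real.exp (-u e) - 1|) *
        ∏ e ∈ univ.filter (kruskalE lo t), Real.exp (-u e) =
      Real.exp (-∑ e ∈ treeNegUnionE lo t u, u e) *
        ∏ e ∈ t.edgeFinset, (1 - Real.exp (-|u e|)) := by
  have hdisj : Disjoint (t.edgeFinset.filter (u · < 0)) (univ.filter (kruskalE lo t)) :=
    disjoint_left.2 fun e htree hk =>
      (mem_filter.1 hk).2.2.1 (SimpleGraph.mem_edgeFinset.1 (mem_filter.1 htree).1)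
  rw [← sum_neg_distrib, Real.exp_sum, treeNegUnionE, prod_union hdisj, prod_filter (u · < 0),
    prod_congr rfl fun e _ => abs_exp_neg_sub_one (u e), prod_mul_distrib]
  ring

theorem tree_term_bound_general (n : ℕ)
    (u : Sym2 (Fin n) → ℝ) (b : Fin n → ℝ)
    (hstab : ∀ I : Finset (Fin n),
      -∑ i ∈ I, b i ≤
        ∑ p ∈ (I ×ˢ I).filter (fun p : Fin n × Fin n => p.1 < p.2), u s(p.1, p.2))
    (lo : LinearOrder (Sym2 (Fin n))) (hmono : ∀ e f, lo.le e f → u e ≤ u f)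
    (t : SimpleGraph (Fin n)) (ht : t.IsTree) :
    (∏ e ∈ t.edgeFinset, |Real.exp (-u e) - 1|) *
        ∏ e ∈ Finset.univ.filter (kruskalE lo t), Real.exp (-u e)
      ≤ Real.exp (∑ i, b i) * ∏ e ∈ t.edgeFinset, (1 - Real.exp (-|u e|)) := by
  have hsum : -∑ i, b i ≤ ∑ e ∈ treeNegUnionE lo t u, u e :=
    IsStable.neg_sum_le_sum_of_closed hstab _ (fun _ => not_isDiag_of_mem_treeNegUnionE lo)
      fun _ _ hxy => nonpos_of_reachable_of_notMem_treeNegUnionE lo ht hmono hxy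
  have hfactor : 0 ≤ ∏ e ∈ t.edgeFinset, (1 - Real.exp (-|u e|)) := prod_nonneg fun e _ =>
    sub_nonneg.2 (Real.exp_le_one_iff.2 (neg_nonpos.2 (abs_nonneg _)))
  rw [prod_abs_exp_sub_one_mul_prod_kruskalE]
  exact mul_le_mul_of_nonneg_right (Real.exp_le_exp.2 (by linarith)) hfactor

/-- Under the stability condition, for a spanning tree `t` and an edge order
along which `u` is nondecreasing,
`∏_{e ∈ t} |e^{-u_e} - 1| · ∏_{e ∈ E(t)} e^{-u_e}
  ≤ e^{∑ b_i} · ∏_{e ∈ t} (1 - e^{-|u_e|})`. -/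
theorem tree_term_bound (n : ℕ) (hn : 1 ≤ n)
    (u : Sym2 (Fin n) → ℝ) (b : Fin n → ℝ) (hb : ∀ i, 0 ≤ b i)
    (hstab : ∀ I : Finset (Fin n),
      -∑ i ∈ I, b i ≤
        ∑ p ∈ (I ×ˢ I).filter (fun p : Fin n × Fin n => p.1 < p.2), u s(p.1, p.2))
    (lo : LinearOrder (Sym2 (Fin n))) (hmono : ∀ e f, lo.le e f → u e ≤ u f)
    (t : SimpleGraph (Fin n)) (ht : t.IsTree) :
    (∏ e ∈ t.edgeFinset, |Real.exp (-u e) - 1|) *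
        ∏ e ∈ Finset.univ.filter (kruskalE lo t), Real.exp (-u e)
      ≤ Real.exp (∑ i, b i) * ∏ e ∈ t.edgeFinset, (1 - Real.exp (-|u e|)) :=
  tree_term_bound_general n u b hstab lo hmono t ht
end

section
/- Let n ≥ 1, let u_{i,j} ∈ ℂ (1 ≤ i < j ≤ n), and fix a linear order on the edges of K_n along which Re u is nondecreasing (i.e., if edge e precedes edge f then Re u_e ≤ Re u_f). Let t ∈ 𝒯_n be a spanning tree, let E(t) be the set of edges e ∉ t such that e is greater than every edge on the unique path in t between the endpoints of e, and let t_- be the forest consisting of those edges of t with Re u_{i,j} < 0. Then ∑_{ij ∈ t_-} Re u_{i,j} + ∑_{ij ∈ E(t)} Re u_{i,j} ≥ ∑_{{i,j}} Re u_{i,j}, where the last sum ranges over all pairs i < j such that i and j lie in the same connected component of the forest t_-. -/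
open scoped Classical

/-!
Write `w = Re u`, and let `K` join any two distinct vertices lying in one component of `t_-`;
the left-hand side is the sum of `w` over the edges of `K`. As `t` is acyclic, the path in `t`
between two vertices of a component of `t_-` lies in `t_-`, so the tree edges of `K` are exactly
the edges of `t_-`. For a non-tree edge `e = ij`, every edge of the tree path from `i` to `j`
precedes `e` when `e ∈ E(t)`, hence has weight `≤ w e`. So a non-tree edge of `K` with
`w e ≥ 0` lies in `E(t)` (its path lies in `t_-`, of negative weight), and an edge of `E(t)` with
`w e < 0` lies in `K` (its path has negative weight). The non-tree edges of `K` outside `E(t)`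
therefore weigh `≤ 0` and the edges of `E(t)` outside `K` weigh `≥ 0`.
-/

namespace Finset

theorem sum_le_sum_of_nonpos_of_nonneg_s13 {ι M : Type*} [DecidableEq ι]
    [AddCommMonoid M] [PartialOrder M] [IsOrderedAddMonoid M]
    {s t : Finset ι} {f : ι → M}
    (hs : ∀ i ∈ s, i ∉ t → f i ≤ 0) (ht : ∀ i ∈ t, i ∉ s → 0 ≤ f i) :
    ∑ i ∈ s, f i ≤ ∑ i ∈ t, f i :=
  calc ∑ i ∈ s, f i = ∑ i ∈ s ∩ t, f i + ∑ i ∈ s \ t, f i :=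
        (sum_inter_add_sum_sdiff s t f).symm
    _ ≤ ∑ i ∈ s ∩ t, f i := add_le_of_nonpos_right <| sum_nonpos fun i hi =>
        hs i (mem_sdiff.1 hi).1 (mem_sdiff.1 hi).2
    _ ≤ ∑ i ∈ t, f i := sum_le_sum_of_subset_of_nonneg inter_subset_right
        fun i hit his => ht i hit fun hs' => his (mem_inter.2 ⟨hs', hit⟩)

end Finset

namespace SimpleGraph

variable {V : Type*}

theorem sum_edgeFinset_eq_sum_lt {M : Type*} [AddCommMonoid M] [LinearOrder V] [Fintype V]
    (H : SimpleGraph V) [DecidableRel H.Adj] (f : Sym2 V → M) :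
    ∑ e ∈ H.edgeFinset, f e =
      ∑ p ∈ Finset.univ.filter (fun p : V × V => p.1 < p.2 ∧ H.Adj p.1 p.2),
        f s(p.1, p.2) := by
  rw [← Finset.sum_image (g := fun p : V × V => s(p.1, p.2)) (f := f)]
  · congr 1
    ext e
    induction e using Sym2.ind with
    | _ a b =>
    simp only [Finset.mem_image, Finset.mem_filter, Finset.mem_univ, true_and, mem_edgeFinset,
      mem_edgeSet, Prod.exists, Sym2.eq_iff]
    constructor
    · intro h
      rcases h.ne.lt_or_gt with hab | hab
      · exact ⟨a, b, ⟨hab, h⟩, .inl ⟨rfl, rfl⟩⟩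
      · exact ⟨b, a, ⟨hab, h.symm⟩, .inr ⟨rfl, rfl⟩⟩
    · rintro ⟨x, y, ⟨-, h⟩, ⟨rfl, rfl⟩ | ⟨rfl, rfl⟩⟩
      · exact h
      · exact h.symm
  · rintro ⟨a, b⟩ hab ⟨c, d⟩ hcd h
    simp only [Finset.coe_filter, Finset.mem_univ, true_and, Set.mem_ofPred_eq] at hab hcd
    rcases Sym2.eq_iff.1 h with ⟨rfl, rfl⟩ | ⟨rfl, rfl⟩
    · rfl
    · exact absurd hab.1 hcd.1.not_gt

theorem sum_edgeFinset_eq_inf_add_sdiff {M : Type*} [AddCommMonoid M] [Fintype V]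
    [DecidableEq V] (G H : SimpleGraph V) [DecidableRel G.Adj] [DecidableRel H.Adj]
    (f : Sym2 V → M) :
    ∑ e ∈ G.edgeFinset, f e =
      ∑ e ∈ (G ⊓ H).edgeFinset, f e + ∑ e ∈ (G \ H).edgeFinset, f e := by
  rw [edgeFinset_inf, edgeFinset_sdiff, Finset.sum_inter_add_sum_sdiff]

theorem IsAcyclic.mem_edgeSet_of_mem_path {G H : SimpleGraph V} (hG : G.IsAcyclic)
    (hHG : H ≤ G) {i j : V} (hr : H.Reachable i j) (p : G.Path i j) {e : Sym2 V}
    (he : e ∈ p.1.edges) : e ∈ H.edgeSet := by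
  obtain ⟨q⟩ := hr
  have hp : p = ⟨q.toPath.1.mapLe hHG, q.toPath.2.mapLe hHG⟩ :=
    (hG.subsingleton_path i j).elim _ _
  rw [hp, Walk.edges_mapLe_eq_edges] at he
  exact q.toPath.1.edges_subset_edgeSet he

theorem IsAcyclic.fromRel_reachable_inf_eq {G H : SimpleGraph V} (hG : G.IsAcyclic)
    (hHG : H ≤ G) : fromRel H.Reachable ⊓ G = H := by
  ext a b
  simp only [inf_adj, fromRel_adj, reachable_comm, or_self]
  refine ⟨fun ⟨⟨_, hr⟩, hab⟩ => ?_, fun h => ⟨⟨h.ne, h.reachable⟩, hHG h⟩⟩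
  exact hG.mem_edgeSet_of_mem_path hHG hr (Path.singleton hab) (e := s(a, b)) (by simp)

end SimpleGraph

open SimpleGraph

section negForest

variable {n : ℕ} {t : SimpleGraph (Fin n)} {w : Sym2 (Fin n) → ℝ}

theorem negForest_le_s13 (t : SimpleGraph (Fin n)) (w : Sym2 (Fin n) → ℝ) : negForest t w ≤ t :=
  fun _ _ h => h.1

theorem mem_edgeSet_negForest {e : Sym2 (Fin n)} :
    e ∈ (negForest t w).edgeSet ↔ e ∈ t.edgeSet ∧ w e < 0 := by
  induction e using Sym2.ind with
  | _ a b => rfl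

variable {lo : LinearOrder (Sym2 (Fin n))}

theorem reachable_negForest_of_kruskalE (hmono : ∀ e f, lo.le e f → w e ≤ w f)
    (ht : t.Connected) {i j : Fin n} (he : kruskalE lo t s(i, j)) (hneg : w s(i, j) < 0) :
    (negForest t w).Reachable i j := by
  obtain ⟨q⟩ := ht.preconnected i j
  refine ⟨q.toPath.1.transfer _ fun f hf => mem_edgeSet_negForest.2
    ⟨q.toPath.1.edges_subset_edgeSet hf, ?_⟩⟩
  exact (hmono _ _ ((lo.lt_iff_le_not_ge _ _).1 (he.2.2 i j rfl q.toPath f hf)).1).trans_lt hneg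

theorem kruskalE_of_reachable_negForest (hmono : ∀ e f, lo.le e f → w e ≤ w f)
    (ht : t.IsAcyclic) {i j : Fin n} (hij : i ≠ j)
    (hr : (negForest t w).Reachable i j) (hnt : s(i, j) ∉ t.edgeSet) (hnn : 0 ≤ w s(i, j)) :
    kruskalE lo t s(i, j) := by
  refine ⟨Sym2.mk_isDiag_iff.not.2 hij, hnt, fun a b hab p f hf => ?_⟩
  have hrab : (negForest t w).Reachable a b := by
    rcases Sym2.eq_iff.1 hab with ⟨rfl, rfl⟩ | ⟨rfl, rfl⟩
    · exact hr
    · exact hr.symm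
  have hf : w f < 0 := (mem_edgeSet_negForest.1
    (ht.mem_edgeSet_of_mem_path (negForest_le_s13 t w) hrab p hf)).2
  have hnle : ¬ lo.le s(i, j) f := fun hle => (hmono _ _ hle).not_gt (hf.trans_le hnn)
  exact (lo.lt_iff_le_not_ge _ _).2 ⟨(lo.le_total _ _).resolve_left hnle, hnle⟩

theorem sum_edgeFinset_sdiff_le_sum_kruskalE (hmono : ∀ e f, lo.le e f → w e ≤ w f)
    (ht : t.IsTree) :
    ∑ e ∈ (fromRel (negForest t w).Reachable \ t).edgeFinset, w e
      ≤ ∑ e ∈ Finset.univ.filter (kruskalE lo t), w e := by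
  refine Finset.sum_le_sum_of_nonpos_of_nonneg_s13 (fun e he hk => ?_) (fun e he hK => ?_)
  · induction e using Sym2.ind with
    | _ a b =>
    simp only [mem_edgeFinset, edgeSet_sdiff, Set.mem_sdiff, mem_edgeSet, fromRel_adj,
      reachable_comm, or_self, Finset.mem_filter, Finset.mem_univ, true_and] at he hk
    obtain ⟨⟨hab, hr⟩, hnt⟩ := he
    exact le_of_not_gt fun hpos =>
      hk (kruskalE_of_reachable_negForest hmono ht.isAcyclic hab hr hnt hpos.le)
  · induction e using Sym2.ind with
    | _ a b =>
    simp only [mem_edgeFinset, edgeSet_sdiff, Set.mem_sdiff, mem_edgeSet, fromRel_adj,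
      reachable_comm, or_self, Finset.mem_filter, Finset.mem_univ, true_and] at he hK
    exact le_of_not_gt fun hneg => hK ⟨⟨Sym2.mk_isDiag_iff.not.1 he.1,
      reachable_negForest_of_kruskalE hmono ht.connected he hneg⟩, he.2.1⟩

end negForest

theorem kruskal_key_inequality_complex_general (n : ℕ)
    (u : Sym2 (Fin n) → ℂ)
    (lo : LinearOrder (Sym2 (Fin n))) (hmono : ∀ e f, lo.le e f → (u e).re ≤ (u f).re)
    (t : SimpleGraph (Fin n)) (ht : t.IsTree) :
    ∑ p ∈ Finset.univ.filter
        (fun p : Fin n × Fin n => p.1 < p.2 ∧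
          (negForest t (fun e => (u e).re)).Reachable p.1 p.2),
        (u s(p.1, p.2)).re
      ≤ (∑ e ∈ (negForest t (fun e => (u e).re)).edgeFinset, (u e).re)
        + ∑ e ∈ Finset.univ.filter (kruskalE lo t), (u e).re := by
  set w : Sym2 (Fin n) → ℝ := fun e => (u e).re
  set K := fromRel (negForest t w).Reachable
  have hpairs : ∑ p ∈ Finset.univ.filter
      (fun p : Fin n × Fin n => p.1 < p.2 ∧ (negForest t w).Reachable p.1 p.2), w s(p.1, p.2)
        = ∑ e ∈ K.edgeFinset, w e := by
    rw [sum_edgeFinset_eq_sum_lt]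
    refine Finset.sum_congr (Finset.filter_congr fun p _ => ?_) fun _ _ => rfl
    simp only [K, fromRel_adj, reachable_comm, or_self]
    exact ⟨fun h => ⟨h.1, h.1.ne, h.2⟩, fun h => ⟨h.1, h.2.2⟩⟩
  have hinf : K ⊓ t = negForest t w := ht.isAcyclic.fromRel_reachable_inf_eq (negForest_le_s13 t w)
  rw [hpairs, sum_edgeFinset_eq_inf_add_sdiff K t, edgeFinset_inj.2 hinf]
  exact add_le_add_right (sum_edgeFinset_sdiff_le_sum_kruskalE hmono ht) _

/-- **Key inequality, complex case**: for complex weights `u`, a spanning tree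
`t`, and an edge order along which `Re u` is nondecreasing,
`∑_{e ∈ t_-} Re u_e + ∑_{e ∈ E(t)} Re u_e ≥ ∑ Re u_{i,j}`, where the last sum
is over pairs `i < j` lying in the same connected component of the forest
`t_-` (the edges of `t` with `Re u < 0`). -/
theorem kruskal_key_inequality_complex (n : ℕ) (hn : 1 ≤ n)
    (u : Sym2 (Fin n) → ℂ)
    (lo : LinearOrder (Sym2 (Fin n))) (hmono : ∀ e f, lo.le e f → (u e).re ≤ (u f).re)
    (t : SimpleGraph (Fin n)) (ht : t.IsTree) :
    ∑ p ∈ Finset.univ.filter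
        (fun p : Fin n × Fin n => p.1 < p.2 ∧
          (negForest t (fun e => (u e).re)).Reachable p.1 p.2),
        (u s(p.1, p.2)).re
      ≤ (∑ e ∈ (negForest t (fun e => (u e).re)).edgeFinset, (u e).re)
        + ∑ e ∈ Finset.univ.filter (kruskalE lo t), (u e).re :=
  kruskal_key_inequality_complex_general n u lo hmono t ht
end
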